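/- Let Ĝ be a signed non-separable bigraph. Then Ĝ is a chordal signed bigraph if and only if Ĝ does not contain any signed graph belonging to F_1 ∪ F_2 ∪ F_3 ∪ F_4 ∪ F_5 ∪ F_6 as an induced subgraph. -/

import Mathlib

universe u

/-! ## Basic unsigned notions for bipartite graphs -/

/-- `G` has an induced cycle of length at least 6 (signs, if any, are arbitrary). -/
def HasLongInducedCycle {V : Type u} (G : SimpleGraph V) : Prop :=
  ∃ n : ℕ, 6 ≤ n ∧ ∃ f : ZMod n → V, Function.Injective f ∧
    ∀ i j : ZMod n, G.Adj (f i) (f j) ↔ (j = i + 1 ∨ i = j + 1)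

/-- A graph is separable if it contains an induced `2K₂`. -/
def IsSeparableGraph {V : Type u} (G : SimpleGraph V) : Prop :=
  ∃ a b c d : V, [a, b, c, d].Pairwise (· ≠ ·) ∧
    G.Adj a b ∧ G.Adj c d ∧ ¬ G.Adj a c ∧ ¬ G.Adj a d ∧ ¬ G.Adj b c ∧ ¬ G.Adj b d

/-- An edge `ab` of a bipartite graph is simplicial if every vertex of `N(a) - {b}`
is adjacent to every vertex of `N(b) - {a}`. -/
def SimplicialEdge {V : Type u} (G : SimpleGraph V) (a b : V) : Prop :=
  G.Adj a b ∧ ∀ c ∈ G.neighborSet a \ {b}, ∀ d ∈ G.neighborSet b \ {a}, G.Adj c d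

/-- A canonical ordering of a bigraph with bipartition given by `side`
(`X` is the `side = true` part, `Y` the `side = false` part): the neighbourhoods of
the `x`'s are decreasing and those of the `y`'s are increasing. -/
def IsCanonicalOrdering {V : Type u} (G : SimpleGraph V) (side : V → Bool)
    {α β : ℕ} (x : Fin α → V) (y : Fin β → V) : Prop :=
  Function.Injective x ∧ Function.Injective y ∧
  (∀ w : V, side w = true ↔ w ∈ Set.range x) ∧
  (∀ w : V, side w = false ↔ w ∈ Set.range y) ∧
  (∀ i j : Fin α, i ≤ j → G.neighborSet (x j) ⊆ G.neighborSet (x i)) ∧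
  (∀ i j : Fin β, i ≤ j → G.neighborSet (y i) ⊆ G.neighborSet (y j))

/-- `H` is a non-trivial (i.e. containing at least one edge) connected component
of `G - S`. -/
def IsNontrivialComponentOf {V : Type u} (G : SimpleGraph V) (S H : Set V) : Prop :=
  H ⊆ Sᶜ ∧ (G.induce H).Connected ∧
  (∀ a ∈ H, ∀ b ∈ Sᶜ, G.Adj a b → b ∈ H) ∧
  (∃ a ∈ H, ∃ b ∈ H, G.Adj a b)

/-- `S` minimally separates the non-trivial components `H` and `H'` of `G - S`:
every vertex of `S` has a neighbour in `H` and a neighbour in `H'`. -/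
def MinimallySeparates {V : Type u} (G : SimpleGraph V) (S H H' : Set V) : Prop :=
  IsNontrivialComponentOf G S H ∧ IsNontrivialComponentOf G S H' ∧ H ≠ H' ∧
  ∀ s ∈ S, (∃ a ∈ H, G.Adj s a) ∧ (∃ a ∈ H', G.Adj s a)

/-! ## Signed bigraphs -/

/-- A signed bigraph: a bipartite graph (with bipartition recorded by `side`)
whose edges carry a sign (`true` = positive, `false` = negative). -/
structure SignedBigraph (V : Type u) where
  graph : SimpleGraph V
  sign : V → V → Bool
  sign_symm : ∀ a b : V, sign a b = sign b a
  side : V → Bool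
  bipartite : ∀ ⦃a b : V⦄, graph.Adj a b → side a ≠ side b

namespace SignedBigraph

variable {V : Type u}

def Adj (G : SignedBigraph V) (a b : V) : Prop := G.graph.Adj a b

/-- `N(ab) = (N(a) ∪ N(b)) - {a, b}`. -/
def edgeNbhd (G : SignedBigraph V) (a b : V) : Set V :=
  (G.graph.neighborSet a ∪ G.graph.neighborSet b) \ {a, b}

/-- The edge `ab` is signed simplicial: `N(ab)` induces a positive biclique. -/
def SignedSimplicial (G : SignedBigraph V) (a b : V) : Prop :=
  G.Adj a b ∧
    ∀ c ∈ G.edgeNbhd a b, ∀ d ∈ G.edgeNbhd a b,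
      G.side c ≠ G.side d → (G.Adj c d ∧ G.sign c d = true)

/-- Delete a set of edges from a signed bigraph (keeping all vertices). -/
def deleteEdges (G : SignedBigraph V) (s : Set (Sym2 V)) : SignedBigraph V where
  graph := G.graph.deleteEdges s
  sign := G.sign
  sign_symm := G.sign_symm
  side := G.side
  bipartite := by
    intro a b h
    exact G.bipartite (SimpleGraph.deleteEdges_adj.mp h).1

/-- The induced signed subgraph on a set of vertices. -/
def induce (G : SignedBigraph V) (A : Set V) : SignedBigraph A where
  graph := G.graph.induce A
  sign a b := G.sign a b
  sign_symm a b := G.sign_symm a b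
  side a := G.side a
  bipartite := by
    intro a b h
    exact G.bipartite h

/-- A chordal signed bigraph: the edges can be ordered `e₁, …, e_m` so that each `eᵢ`
is a signed simplicial edge of the signed bigraph obtained by deleting `e₁, …, e_{i-1}`. -/
def IsChordal (G : SignedBigraph V) : Prop :=
  ∃ l : List (Sym2 V), l.Nodup ∧ (∀ e, e ∈ G.graph.edgeSet ↔ e ∈ l) ∧
    ∀ (i : ℕ) (h : i < l.length), ∃ a b : V,
      l.get ⟨i, h⟩ = s(a, b) ∧
      (G.deleteEdges {e | e ∈ l.take i}).SignedSimplicial a b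

/-! ## Forbidden patterns F₁ – F₆, D, long cycles -/

/-- `G` contains the all-negative 4-cycle `F₁` as an induced subgraph. -/
def HasF1 (G : SignedBigraph V) : Prop :=
  ∃ u1 u2 v1 v2 : V,
    [u1, u2, v1, v2].Pairwise (· ≠ ·) ∧
    G.Adj u1 v1 ∧ G.Adj u1 v2 ∧ G.Adj u2 v1 ∧ G.Adj u2 v2 ∧
    ¬ G.Adj u1 u2 ∧ ¬ G.Adj v1 v2 ∧
    G.sign u1 v1 = false ∧ G.sign u1 v2 = false ∧
    G.sign u2 v1 = false ∧ G.sign u2 v2 = false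

/-- `G` contains a member of `F₂` (a signed `K_{2,3}`) as an induced subgraph. -/
def HasF2 (G : SignedBigraph V) : Prop :=
  ∃ u1 u2 v1 v2 v3 : V,
    [u1, u2, v1, v2, v3].Pairwise (· ≠ ·) ∧
    G.Adj u1 v1 ∧ G.Adj u1 v2 ∧ G.Adj u1 v3 ∧
    G.Adj u2 v1 ∧ G.Adj u2 v2 ∧ G.Adj u2 v3 ∧
    ¬ G.Adj u1 u2 ∧ ¬ G.Adj v1 v2 ∧ ¬ G.Adj v1 v3 ∧ ¬ G.Adj v2 v3 ∧
    G.sign u1 v1 = false ∧ G.sign u1 v2 = false ∧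
    G.sign u2 v2 = false ∧ G.sign u2 v3 = false

/-- `G` contains a member of `F₃` (a signed `K_{2,4}`) as an induced subgraph. -/
def HasF3 (G : SignedBigraph V) : Prop :=
  ∃ u1 u2 v1 v2 v3 v4 : V,
    [u1, u2, v1, v2, v3, v4].Pairwise (· ≠ ·) ∧
    G.Adj u1 v1 ∧ G.Adj u1 v2 ∧ G.Adj u1 v3 ∧ G.Adj u1 v4 ∧
    G.Adj u2 v1 ∧ G.Adj u2 v2 ∧ G.Adj u2 v3 ∧ G.Adj u2 v4 ∧
    ¬ G.Adj u1 u2 ∧ ¬ G.Adj v1 v2 ∧ ¬ G.Adj v1 v3 ∧ ¬ G.Adj v1 v4 ∧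
    ¬ G.Adj v2 v3 ∧ ¬ G.Adj v2 v4 ∧ ¬ G.Adj v3 v4 ∧
    G.sign u1 v1 = false ∧ G.sign u1 v2 = false ∧
    G.sign u2 v3 = false ∧ G.sign u2 v4 = false

/-- `G` contains a member of `F₄` (a signed `K_{3,3}` with negative perfect matching)
as an induced subgraph. -/
def HasF4 (G : SignedBigraph V) : Prop :=
  ∃ u1 u2 u3 v1 v2 v3 : V,
    [u1, u2, u3, v1, v2, v3].Pairwise (· ≠ ·) ∧
    G.Adj u1 v1 ∧ G.Adj u1 v2 ∧ G.Adj u1 v3 ∧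
    G.Adj u2 v1 ∧ G.Adj u2 v2 ∧ G.Adj u2 v3 ∧
    G.Adj u3 v1 ∧ G.Adj u3 v2 ∧ G.Adj u3 v3 ∧
    ¬ G.Adj u1 u2 ∧ ¬ G.Adj u1 u3 ∧ ¬ G.Adj u2 u3 ∧
    ¬ G.Adj v1 v2 ∧ ¬ G.Adj v1 v3 ∧ ¬ G.Adj v2 v3 ∧
    G.sign u1 v1 = false ∧ G.sign u2 v2 = false ∧ G.sign u3 v3 = false

/-- `G` contains a member of `F₅` as an induced subgraph. -/
def HasF5 (G : SignedBigraph V) : Prop :=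
  ∃ x1 x2 x3 y1 y2 y3 : V,
    [x1, x2, x3, y1, y2, y3].Pairwise (· ≠ ·) ∧
    G.Adj x1 y1 ∧ G.Adj x1 y2 ∧ ¬ G.Adj x1 y3 ∧
    G.Adj x2 y1 ∧ G.Adj x2 y2 ∧ G.Adj x2 y3 ∧
    G.Adj x3 y1 ∧ G.Adj x3 y2 ∧ G.Adj x3 y3 ∧
    ¬ G.Adj x1 x2 ∧ ¬ G.Adj x1 x3 ∧ ¬ G.Adj x2 x3 ∧
    ¬ G.Adj y1 y2 ∧ ¬ G.Adj y1 y3 ∧ ¬ G.Adj y2 y3 ∧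
    G.sign x2 y1 = false ∧ G.sign x3 y2 = false

/-- `G` contains a member of `F₆` as an induced subgraph. -/
def HasF6 (G : SignedBigraph V) : Prop :=
  ∃ x1 x2 x3 x4 y1 y2 y3 y4 : V,
    [x1, x2, x3, x4, y1, y2, y3, y4].Pairwise (· ≠ ·) ∧
    G.Adj x1 y1 ∧ G.Adj x1 y2 ∧ ¬ G.Adj x1 y3 ∧ ¬ G.Adj x1 y4 ∧
    G.Adj x2 y1 ∧ G.Adj x2 y2 ∧ ¬ G.Adj x2 y3 ∧ ¬ G.Adj x2 y4 ∧
    G.Adj x3 y1 ∧ G.Adj x3 y2 ∧ G.Adj x3 y3 ∧ G.Adj x3 y4 ∧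
    G.Adj x4 y1 ∧ G.Adj x4 y2 ∧ G.Adj x4 y3 ∧ G.Adj x4 y4 ∧
    ¬ G.Adj x1 x2 ∧ ¬ G.Adj x1 x3 ∧ ¬ G.Adj x1 x4 ∧
    ¬ G.Adj x2 x3 ∧ ¬ G.Adj x2 x4 ∧ ¬ G.Adj x3 x4 ∧
    ¬ G.Adj y1 y2 ∧ ¬ G.Adj y1 y3 ∧ ¬ G.Adj y1 y4 ∧
    ¬ G.Adj y2 y3 ∧ ¬ G.Adj y2 y4 ∧ ¬ G.Adj y3 y4 ∧
    G.sign x1 y1 = false ∧ G.sign x2 y1 = false ∧ G.sign x3 y2 = false ∧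
    G.sign x4 y3 = false ∧ G.sign x4 y4 = false

/-- `G` contains a member of `D` (a 6-cycle `x₁y₁x₂y₃x₃y₂x₁` plus a negative chord
`x₂y₂`) as an induced subgraph. -/
def HasD (G : SignedBigraph V) : Prop :=
  ∃ x1 x2 x3 y1 y2 y3 : V,
    [x1, x2, x3, y1, y2, y3].Pairwise (· ≠ ·) ∧
    G.Adj x1 y1 ∧ G.Adj y1 x2 ∧ G.Adj x2 y3 ∧ G.Adj y3 x3 ∧
    G.Adj x3 y2 ∧ G.Adj y2 x1 ∧
    G.Adj x2 y2 ∧ G.sign x2 y2 = false ∧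
    ¬ G.Adj x1 y3 ∧ ¬ G.Adj x3 y1 ∧
    ¬ G.Adj x1 x2 ∧ ¬ G.Adj x1 x3 ∧ ¬ G.Adj x2 x3 ∧
    ¬ G.Adj y1 y2 ∧ ¬ G.Adj y1 y3 ∧ ¬ G.Adj y2 y3

/-- `G` contains an induced signed cycle of length at least 6. -/
def HasLongCycle (G : SignedBigraph V) : Prop :=
  HasLongInducedCycle G.graph

/-! ## Minimal forbidden patterns M₁ – M₅ for complete bigraphs -/

def HasM1 (G : SignedBigraph V) : Prop := G.HasF1

def HasM2 (G : SignedBigraph V) : Prop :=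
  ∃ u1 u2 v1 v2 v3 : V,
    [u1, u2, v1, v2, v3].Pairwise (· ≠ ·) ∧
    G.Adj u1 v1 ∧ G.Adj u1 v2 ∧ G.Adj u1 v3 ∧
    G.Adj u2 v1 ∧ G.Adj u2 v2 ∧ G.Adj u2 v3 ∧
    ¬ G.Adj u1 u2 ∧ ¬ G.Adj v1 v2 ∧ ¬ G.Adj v1 v3 ∧ ¬ G.Adj v2 v3 ∧
    G.sign u1 v1 = false ∧ G.sign u1 v2 = false ∧
    G.sign u2 v2 = false ∧ G.sign u2 v3 = false ∧
    G.sign u1 v3 = true ∧ G.sign u2 v1 = true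

def HasM3 (G : SignedBigraph V) : Prop :=
  ∃ u1 u2 v1 v2 v3 v4 : V,
    [u1, u2, v1, v2, v3, v4].Pairwise (· ≠ ·) ∧
    G.Adj u1 v1 ∧ G.Adj u1 v2 ∧ G.Adj u1 v3 ∧ G.Adj u1 v4 ∧
    G.Adj u2 v1 ∧ G.Adj u2 v2 ∧ G.Adj u2 v3 ∧ G.Adj u2 v4 ∧
    ¬ G.Adj u1 u2 ∧ ¬ G.Adj v1 v2 ∧ ¬ G.Adj v1 v3 ∧ ¬ G.Adj v1 v4 ∧
    ¬ G.Adj v2 v3 ∧ ¬ G.Adj v2 v4 ∧ ¬ G.Adj v3 v4 ∧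
    G.sign u1 v1 = false ∧ G.sign u1 v2 = false ∧
    G.sign u2 v3 = false ∧ G.sign u2 v4 = false ∧
    G.sign u1 v3 = true ∧ G.sign u1 v4 = true ∧
    G.sign u2 v1 = true ∧ G.sign u2 v2 = true

def HasM4 (G : SignedBigraph V) : Prop :=
  ∃ u1 u2 u3 v1 v2 v3 : V,
    [u1, u2, u3, v1, v2, v3].Pairwise (· ≠ ·) ∧
    G.Adj u1 v1 ∧ G.Adj u1 v2 ∧ G.Adj u1 v3 ∧
    G.Adj u2 v1 ∧ G.Adj u2 v2 ∧ G.Adj u2 v3 ∧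
    G.Adj u3 v1 ∧ G.Adj u3 v2 ∧ G.Adj u3 v3 ∧
    ¬ G.Adj u1 u2 ∧ ¬ G.Adj u1 u3 ∧ ¬ G.Adj u2 u3 ∧
    ¬ G.Adj v1 v2 ∧ ¬ G.Adj v1 v3 ∧ ¬ G.Adj v2 v3 ∧
    G.sign u1 v1 = false ∧ G.sign u2 v2 = false ∧ G.sign u3 v3 = false ∧
    G.sign u1 v2 = true ∧ G.sign u1 v3 = true ∧ G.sign u2 v1 = true ∧
    G.sign u2 v3 = true ∧ G.sign u3 v1 = true ∧ G.sign u3 v2 = true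

def HasM5 (G : SignedBigraph V) : Prop :=
  ∃ x1 x2 x3 y1 y2 y3 : V,
    [x1, x2, x3, y1, y2, y3].Pairwise (· ≠ ·) ∧
    G.Adj x1 y1 ∧ G.Adj x1 y2 ∧ G.Adj x1 y3 ∧
    G.Adj x2 y1 ∧ G.Adj x2 y2 ∧ G.Adj x2 y3 ∧
    G.Adj x3 y1 ∧ G.Adj x3 y2 ∧ G.Adj x3 y3 ∧
    ¬ G.Adj x1 x2 ∧ ¬ G.Adj x1 x3 ∧ ¬ G.Adj x2 x3 ∧
    ¬ G.Adj y1 y2 ∧ ¬ G.Adj y1 y3 ∧ ¬ G.Adj y2 y3 ∧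
    G.sign x1 y1 = false ∧ G.sign x1 y2 = false ∧
    G.sign x2 y2 = false ∧ G.sign x3 y3 = false ∧
    G.sign x1 y3 = true ∧ G.sign x2 y1 = true ∧ G.sign x2 y3 = true ∧
    G.sign x3 y1 = true ∧ G.sign x3 y2 = true

/-! ## The patterns W₁ – W₆ (relativized to an ambient vertex set `A`, with the
distinguished vertices being exactly the vertices in `S`). -/

def HasW1In (G : SignedBigraph V) (A S : Set V) : Prop :=
  ∃ u y x z : V, u ∈ A ∧ y ∈ A ∧ x ∈ A ∧ z ∈ A ∧
    [u, y, x, z].Pairwise (· ≠ ·) ∧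
    G.Adj u y ∧ G.Adj u z ∧ G.Adj x y ∧ G.Adj x z ∧
    ¬ G.Adj u x ∧ ¬ G.Adj y z ∧
    G.sign x y = false ∧ G.sign x z = false ∧
    x ∈ S ∧ u ∉ S ∧ y ∉ S ∧ z ∉ S

def HasW2In (G : SignedBigraph V) (A S : Set V) : Prop :=
  ∃ u y v z p : V, u ∈ A ∧ y ∈ A ∧ v ∈ A ∧ z ∈ A ∧ p ∈ A ∧
    [u, y, v, z, p].Pairwise (· ≠ ·) ∧
    G.Adj u y ∧ G.Adj u z ∧ G.Adj v y ∧ G.Adj v z ∧ G.Adj p v ∧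
    ¬ G.Adj u v ∧ ¬ G.Adj y z ∧ ¬ G.Adj p u ∧ ¬ G.Adj p y ∧ ¬ G.Adj p z ∧
    G.sign v y = false ∧ G.sign v z = false ∧
    p ∈ S ∧ u ∉ S ∧ y ∉ S ∧ v ∉ S ∧ z ∉ S

def HasW3In (G : SignedBigraph V) (A S : Set V) : Prop :=
  ∃ u y v z p : V, u ∈ A ∧ y ∈ A ∧ v ∈ A ∧ z ∈ A ∧ p ∈ A ∧
    [u, y, v, z, p].Pairwise (· ≠ ·) ∧
    G.Adj u y ∧ G.Adj u z ∧ G.Adj v y ∧ G.Adj v z ∧ G.Adj p v ∧ G.Adj p u ∧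
    ¬ G.Adj u v ∧ ¬ G.Adj y z ∧ ¬ G.Adj p y ∧ ¬ G.Adj p z ∧
    G.sign v y = false ∧ G.sign v z = false ∧ G.sign p u = false ∧
    p ∈ S ∧ u ∉ S ∧ y ∉ S ∧ v ∉ S ∧ z ∉ S

def HasW4In (G : SignedBigraph V) (A S : Set V) : Prop :=
  ∃ u y c z p q : V, u ∈ A ∧ y ∈ A ∧ c ∈ A ∧ z ∈ A ∧ p ∈ A ∧ q ∈ A ∧
    [u, y, c, z, p, q].Pairwise (· ≠ ·) ∧
    G.Adj u y ∧ G.Adj u z ∧ G.Adj c y ∧ G.Adj c z ∧ G.Adj p c ∧ G.Adj p u ∧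
    G.Adj q p ∧
    ¬ G.Adj u c ∧ ¬ G.Adj y z ∧ ¬ G.Adj p y ∧ ¬ G.Adj p z ∧
    ¬ G.Adj q u ∧ ¬ G.Adj q y ∧ ¬ G.Adj q c ∧ ¬ G.Adj q z ∧
    G.sign c y = false ∧ G.sign c z = false ∧ G.sign p u = false ∧
    q ∈ S ∧ u ∉ S ∧ y ∉ S ∧ c ∉ S ∧ z ∉ S ∧ p ∉ S

def HasW5In (G : SignedBigraph V) (A S : Set V) : Prop :=
  ∃ u y v z x : V, u ∈ A ∧ y ∈ A ∧ v ∈ A ∧ z ∈ A ∧ x ∈ A ∧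
    [u, y, v, z, x].Pairwise (· ≠ ·) ∧
    G.Adj u y ∧ G.Adj u z ∧ G.Adj v y ∧ G.Adj v z ∧ G.Adj x v ∧ G.Adj x u ∧
    ¬ G.Adj u v ∧ ¬ G.Adj y z ∧ ¬ G.Adj x y ∧ ¬ G.Adj x z ∧
    G.sign v y = false ∧ G.sign x u = false ∧
    x ∈ S ∧ y ∈ S ∧ u ∉ S ∧ v ∉ S ∧ z ∉ S

def HasW6In (G : SignedBigraph V) (A S : Set V) : Prop :=
  ∃ u y v z x : V, u ∈ A ∧ y ∈ A ∧ v ∈ A ∧ z ∈ A ∧ x ∈ A ∧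
    [u, y, v, z, x].Pairwise (· ≠ ·) ∧
    G.Adj u y ∧ G.Adj u z ∧ G.Adj v y ∧ G.Adj v z ∧ G.Adj x v ∧
    ¬ G.Adj u v ∧ ¬ G.Adj y z ∧ ¬ G.Adj x u ∧ ¬ G.Adj x y ∧ ¬ G.Adj x z ∧
    G.sign v y = false ∧
    x ∈ S ∧ y ∈ S ∧ u ∉ S ∧ v ∉ S ∧ z ∉ S

/-! ## Tadpoles, sums and joins -/

/-- The vertex set of a tadpole with heads `w, y, z` and path vertices `x`. -/
def tadVerts {n : ℕ} (w y z : V) (x : Fin n → V) : Set V :=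
  {w, y, z} ∪ Set.range x

/-- The data `(w, y, z, x)` forms an induced tadpole in `G`:
`w, y, z, x ⟨k⟩` induce a 4-cycle whose edges `x ⟨k⟩ y` and `x ⟨k⟩ z` are negative,
together with the induced path `x ⟨k⟩, x ⟨k-1⟩, …, x 0`; the vertex `x 0` is the end
and `w, y, z` are the heads.  If `t2 = true` the tadpole is of type 2: there is
additionally a negative edge from `w` to `x ⟨k-1⟩`.
(The paper's parameter `k ≥ 1` corresponds to `k + 1` here.) -/
structure IsInducedTadpole (G : SignedBigraph V) (k : ℕ) (t2 : Bool)
    (w y z : V) (x : Fin (k + 1) → V) : Prop where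
  t2_len : t2 = true → 1 ≤ k
  inj : Function.Injective x
  w_notmem : ∀ i, w ≠ x i
  y_notmem : ∀ i, y ≠ x i
  z_notmem : ∀ i, z ≠ x i
  wy : w ≠ y
  wz : w ≠ z
  yz : y ≠ z
  adj_wy : G.Adj w y
  adj_wz : G.Adj w z
  not_adj_yz : ¬ G.Adj y z
  adj_path : ∀ i j : Fin (k + 1), G.Adj (x i) (x j) ↔ (i.1 + 1 = j.1 ∨ j.1 + 1 = i.1)
  adj_y : ∀ i : Fin (k + 1), G.Adj y (x i) ↔ i.1 = k
  adj_z : ∀ i : Fin (k + 1), G.Adj z (x i) ↔ i.1 = k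
  adj_w : ∀ i : Fin (k + 1), G.Adj w (x i) ↔ (t2 = true ∧ i.1 + 1 = k)
  sign_y : ∀ i : Fin (k + 1), i.1 = k → G.sign (x i) y = false
  sign_z : ∀ i : Fin (k + 1), i.1 = k → G.sign (x i) z = false
  sign_w : ∀ i : Fin (k + 1), t2 = true → i.1 + 1 = k → G.sign w (x i) = false

/-- `G` contains a sum of two tadpoles (identified at their ends) as an induced
subgraph. -/
def HasTadpoleSum (G : SignedBigraph V) : Prop :=
  ∃ (k k' : ℕ) (t t' : Bool) (w y z w' y' z' : V)
    (x : Fin (k + 1) → V) (x' : Fin (k' + 1) → V),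
    G.IsInducedTadpole k t w y z x ∧ G.IsInducedTadpole k' t' w' y' z' x' ∧
    x 0 = x' 0 ∧
    tadVerts w y z x ∩ tadVerts w' y' z' x' = {x 0} ∧
    ∀ a ∈ tadVerts w y z x, ∀ b ∈ tadVerts w' y' z' x',
      a ≠ x 0 → b ≠ x' 0 → ¬ G.Adj a b

/-- `G` contains a join of two tadpoles as an induced subgraph: two disjoint induced
tadpoles such that the edges between them are exactly those joining the end of each
tadpole to all vertices of the other tadpole in the opposite partite set; all these
edges are positive, except that the edge from an end to the head `w` of the other
tadpole may be of either sign when that tadpole is a member of `W₁` (i.e. has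
`k = 0` and is of type 1), in which case the ends are required to be adjacent. -/
def HasTadpoleJoin (G : SignedBigraph V) : Prop :=
  ∃ (k k' : ℕ) (t t' : Bool) (w y z w' y' z' : V)
    (x : Fin (k + 1) → V) (x' : Fin (k' + 1) → V),
    G.IsInducedTadpole k t w y z x ∧ G.IsInducedTadpole k' t' w' y' z' x' ∧
    Disjoint (tadVerts w y z x) (tadVerts w' y' z' x') ∧
    (∀ a ∈ tadVerts w y z x, ∀ b ∈ tadVerts w' y' z' x',
      (G.Adj a b ↔ ((a = x 0 ∨ b = x' 0) ∧ G.side a ≠ G.side b))) ∧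
    ((k = 0 ∧ t = false) ∨ (k' = 0 ∧ t' = false) → G.side (x 0) ≠ G.side (x' 0)) ∧
    (∀ a ∈ tadVerts w y z x, ∀ b ∈ tadVerts w' y' z' x', G.Adj a b →
      ¬ (a = x 0 ∧ b = w' ∧ k' = 0 ∧ t' = false) →
      ¬ (a = w ∧ b = x' 0 ∧ k = 0 ∧ t = false) →
      G.sign a b = true)

/-- `G` contains a member of
`ℱ = F₁ ∪ F₂ ∪ F₃ ∪ F₄ ∪ F₅ ∪ F₆ ∪ 𝒞 ∪ D ∪ 𝒮 ∪ 𝒥` as an induced subgraph. -/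
def HasForbidden (G : SignedBigraph V) : Prop :=
  G.HasF1 ∨ G.HasF2 ∨ G.HasF3 ∨ G.HasF4 ∨ G.HasF5 ∨ G.HasF6 ∨
  G.HasLongCycle ∨ G.HasD ∨ G.HasTadpoleSum ∨ G.HasTadpoleJoin

/-- `G` is `ℱ`-free. -/
def FFree (G : SignedBigraph V) : Prop := ¬ G.HasForbidden

end SignedBigraph

/-! ## Concrete complete signed bipartite graphs (for the graphs M₁ – M₅) -/

/-- The complete bipartite graph on `Fin a ⊕ Fin b`. -/
def cbsGraph (a b : ℕ) : SimpleGraph (Fin a ⊕ Fin b) where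
  Adj u v := u.isLeft ≠ v.isLeft
  symm := ⟨fun _ _ h => Ne.symm h⟩
  loopless := ⟨fun _ h => h rfl⟩

def cbsSign {a b : ℕ} (sgn : Fin a → Fin b → Bool) :
    Fin a ⊕ Fin b → Fin a ⊕ Fin b → Bool
  | Sum.inl i, Sum.inr j => sgn i j
  | Sum.inr j, Sum.inl i => sgn i j
  | _, _ => true

/-- The complete signed bipartite graph with parts `Fin a`, `Fin b`, and signs given
by `sgn`. -/
def completeSignedBigraph (a b : ℕ) (sgn : Fin a → Fin b → Bool) :
    SignedBigraph (Fin a ⊕ Fin b) where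
  graph := cbsGraph a b
  sign := cbsSign sgn
  sign_symm := by
    intro u v
    cases u <;> cases v <;> rfl
  side := Sum.isLeft
  bipartite := fun _ _ h => h

/-- `M₁`: the all-negative 4-cycle. -/
def Mgraph1 : SignedBigraph (Fin 2 ⊕ Fin 2) :=
  completeSignedBigraph 2 2 (fun _ _ => false)

/-- `M₂`. -/
def Mgraph2 : SignedBigraph (Fin 2 ⊕ Fin 3) :=
  completeSignedBigraph 2 3
    (fun i j => ! decide ((i = 0 ∧ (j = 0 ∨ j = 1)) ∨ (i = 1 ∧ (j = 1 ∨ j = 2))))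

/-- `M₃`. -/
def Mgraph3 : SignedBigraph (Fin 2 ⊕ Fin 4) :=
  completeSignedBigraph 2 4
    (fun i j => ! decide ((i = 0 ∧ (j = 0 ∨ j = 1)) ∨ (i = 1 ∧ (j = 2 ∨ j = 3))))

/-- `M₄`. -/
def Mgraph4 : SignedBigraph (Fin 3 ⊕ Fin 3) :=
  completeSignedBigraph 3 3 (fun i j => ! decide ((i : ℕ) = (j : ℕ)))

/-- `M₅`. -/
def Mgraph5 : SignedBigraph (Fin 3 ⊕ Fin 3) :=
  completeSignedBigraph 3 3
    (fun i j => ! decide ((i = 0 ∧ (j = 0 ∨ j = 1)) ∨ (i = 1 ∧ j = 1) ∨ (i = 2 ∧ j = 2)))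

/-!
Chordal implies `F₁`–`F₆`-free: in each `Fᵢ` every edge `ab` has a neighbour `c` of `a` and a
neighbour `d` of `b` in `Fᵢ` such that `cd` is a non-edge or a negative edge, so the first edge
of `Fᵢ` to be eliminated is not signed simplicial.

Conversely, deleting a signed simplicial edge keeps a bigraph non-separable and `F₁`–`F₆`-free,
so it suffices to find one signed simplicial edge. In a non-separable bigraph the neighbourhoods
on each side form a chain; let `x₀` have the smallest non-empty one, `A`. Isolating the vertices
with neighbourhood `A` leaves, by induction on the number of edges, a signed simplicial edge
`uv`, which remains signed simplicial in the whole graph unless `v ∈ A`. In that case, and when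
nothing is left, chasing the negative edges that keep the edges at `A`, and the edges `rb` with
`N(b)` minimal in `N(r)`, from being signed simplicial produces one of `F₁`–`F₆`.
-/

namespace SignedBigraph

variable {V : Type u} {G : SignedBigraph V} {a b c d r u v w x₀ z ζ ξ₁ ξ₂ : V}

def nbhd (G : SignedBigraph V) (a : V) : Set V := G.graph.neighborSet a

lemma Adj.symm (h : G.Adj a b) : G.Adj b a := SimpleGraph.Adj.symm h

lemma Adj.ne (h : G.Adj a b) : a ≠ b := G.graph.ne_of_adj h

lemma not_adj_self (a : V) : ¬ G.Adj a a := G.graph.irrefl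

lemma sign_eq_false_symm (h : G.sign a b = false) : G.sign b a = false :=
  (G.sign_symm b a).trans h

lemma not_adj_of_side_eq (h : G.side a = G.side b) : ¬ G.Adj a b := fun hab => G.bipartite hab h

lemma side_eq_not_of_adj (h : G.Adj a b) : G.side b = !G.side a := by
  have := G.bipartite h
  revert this
  cases G.side a <;> cases G.side b <;> simp

lemma side_eq_of_adj_of_adj (ha : G.Adj a c) (hb : G.Adj b c) : G.side a = G.side b := by
  rw [side_eq_not_of_adj ha.symm, side_eq_not_of_adj hb.symm]

lemma side_eq_of_adj_of_side_ne (h : G.Adj a b) (ha : G.side a ≠ G.side c) :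
    G.side b = G.side c := by
  rw [side_eq_not_of_adj h]
  revert ha
  cases G.side a <;> cases G.side c <;> simp

lemma not_adj_of_adj_of_adj (ha : G.Adj a c) (hb : G.Adj b c) : ¬ G.Adj a b :=
  not_adj_of_side_eq (side_eq_of_adj_of_adj ha hb)

lemma side_eq_of_nbhd_eq (hb : (G.nbhd b).Nonempty) (h : G.nbhd a = G.nbhd b) :
    G.side a = G.side b := by
  obtain ⟨c, hc⟩ := hb
  exact side_eq_of_adj_of_adj (h.symm.subset hc) hc

lemma pairwise_ne_append (G : SignedBigraph V) (x : V) {xs ys : List V}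
    (hxs : xs.Pairwise (· ≠ ·)) (hys : ys.Pairwise (· ≠ ·)) (hx : ∀ a ∈ xs, G.side a = G.side x)
    (hy : ∀ b ∈ ys, G.side b = !G.side x) : (xs ++ ys).Pairwise (· ≠ ·) := by
  refine List.pairwise_append.2 ⟨hxs, hys, fun a ha b hb hab => ?_⟩
  have := (hx a ha).symm.trans (hab ▸ hy b hb)
  cases G.side x <;> simp at this

/-! ### The forbidden patterns -/

lemma hasF1_of_adj {u₁ u₂ v₁ v₂ : V} (hu : u₁ ≠ u₂) (hv : v₁ ≠ v₂)
    (h₁₁ : G.Adj u₁ v₁) (h₁₂ : G.Adj u₁ v₂) (h₂₁ : G.Adj u₂ v₁) (h₂₂ : G.Adj u₂ v₂)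
    (s₁₁ : G.sign u₁ v₁ = false) (s₁₂ : G.sign u₁ v₂ = false)
    (s₂₁ : G.sign u₂ v₁ = false) (s₂₂ : G.sign u₂ v₂ = false) : G.HasF1 := by
  have e₂ := side_eq_of_adj_of_adj h₂₁ h₁₁
  have f₁ := side_eq_not_of_adj h₁₁
  have f₂ := side_eq_not_of_adj h₁₂
  have hd : ([u₁, u₂] ++ [v₁, v₂]).Pairwise (· ≠ ·) :=
    pairwise_ne_append G u₁ (by simpa) (by simpa) (by simp [e₂]) (by simp [f₁, f₂])
  exact ⟨u₁, u₂, v₁, v₂, hd, h₁₁, h₁₂, h₂₁, h₂₂, not_adj_of_side_eq (by simp [e₂]),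
    not_adj_of_side_eq (by simp [f₁, f₂]), s₁₁, s₁₂, s₂₁, s₂₂⟩

lemma hasF2_of_adj {u₁ u₂ v₁ v₂ v₃ : V} (hu : u₁ ≠ u₂) (hv₁₂ : v₁ ≠ v₂) (hv₁₃ : v₁ ≠ v₃)
    (hv₂₃ : v₂ ≠ v₃) (h₁₁ : G.Adj u₁ v₁) (h₁₂ : G.Adj u₁ v₂) (h₁₃ : G.Adj u₁ v₃)
    (h₂₁ : G.Adj u₂ v₁) (h₂₂ : G.Adj u₂ v₂) (h₂₃ : G.Adj u₂ v₃)
    (s₁₁ : G.sign u₁ v₁ = false) (s₁₂ : G.sign u₁ v₂ = false)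
    (s₂₂ : G.sign u₂ v₂ = false) (s₂₃ : G.sign u₂ v₃ = false) : G.HasF2 := by
  have e₂ := side_eq_of_adj_of_adj h₂₁ h₁₁
  have f₁ := side_eq_not_of_adj h₁₁
  have f₂ := side_eq_not_of_adj h₁₂
  have f₃ := side_eq_not_of_adj h₁₃
  have hd : ([u₁, u₂] ++ [v₁, v₂, v₃]).Pairwise (· ≠ ·) := pairwise_ne_append G u₁
    (by simpa) (by simp [hv₁₂, hv₁₃, hv₂₃]) (by simp [e₂]) (by simp [f₁, f₂, f₃])
  refine ⟨u₁, u₂, v₁, v₂, v₃, hd, h₁₁, h₁₂, h₁₃, h₂₁, h₂₂, h₂₃, ?_, ?_, ?_, ?_,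
    s₁₁, s₁₂, s₂₂, s₂₃⟩ <;>
  exact not_adj_of_side_eq (by simp [e₂, f₁, f₂, f₃])

lemma hasF3_of_adj {u₁ u₂ v₁ v₂ v₃ v₄ : V} (hu : u₁ ≠ u₂) (hv₁₂ : v₁ ≠ v₂) (hv₁₃ : v₁ ≠ v₃)
    (hv₁₄ : v₁ ≠ v₄) (hv₂₃ : v₂ ≠ v₃) (hv₂₄ : v₂ ≠ v₄) (hv₃₄ : v₃ ≠ v₄)
    (h₁₁ : G.Adj u₁ v₁) (h₁₂ : G.Adj u₁ v₂) (h₁₃ : G.Adj u₁ v₃) (h₁₄ : G.Adj u₁ v₄)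
    (h₂₁ : G.Adj u₂ v₁) (h₂₂ : G.Adj u₂ v₂) (h₂₃ : G.Adj u₂ v₃) (h₂₄ : G.Adj u₂ v₄)
    (s₁₁ : G.sign u₁ v₁ = false) (s₁₂ : G.sign u₁ v₂ = false)
    (s₂₃ : G.sign u₂ v₃ = false) (s₂₄ : G.sign u₂ v₄ = false) : G.HasF3 := by
  have e₂ := side_eq_of_adj_of_adj h₂₁ h₁₁
  have f₁ := side_eq_not_of_adj h₁₁
  have f₂ := side_eq_not_of_adj h₁₂
  have f₃ := side_eq_not_of_adj h₁₃
  have f₄ := side_eq_not_of_adj h₁₄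
  have hd : ([u₁, u₂] ++ [v₁, v₂, v₃, v₄]).Pairwise (· ≠ ·) := pairwise_ne_append G u₁
    (by simpa) (by simp [*]) (by simp [e₂]) (by simp [f₁, f₂, f₃, f₄])
  refine ⟨u₁, u₂, v₁, v₂, v₃, v₄, hd, h₁₁, h₁₂, h₁₃, h₁₄, h₂₁, h₂₂, h₂₃, h₂₄,
    ?_, ?_, ?_, ?_, ?_, ?_, ?_, s₁₁, s₁₂, s₂₃, s₂₄⟩ <;>
  exact not_adj_of_side_eq (by simp [e₂, f₁, f₂, f₃, f₄])

lemma hasF4_of_adj {u₁ u₂ u₃ v₁ v₂ v₃ : V} (hu₁₂ : u₁ ≠ u₂) (hu₁₃ : u₁ ≠ u₃) (hu₂₃ : u₂ ≠ u₃)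
    (hv₁₂ : v₁ ≠ v₂) (hv₁₃ : v₁ ≠ v₃) (hv₂₃ : v₂ ≠ v₃)
    (h₁₁ : G.Adj u₁ v₁) (h₁₂ : G.Adj u₁ v₂) (h₁₃ : G.Adj u₁ v₃)
    (h₂₁ : G.Adj u₂ v₁) (h₂₂ : G.Adj u₂ v₂) (h₂₃ : G.Adj u₂ v₃)
    (h₃₁ : G.Adj u₃ v₁) (h₃₂ : G.Adj u₃ v₂) (h₃₃ : G.Adj u₃ v₃)
    (s₁₁ : G.sign u₁ v₁ = false) (s₂₂ : G.sign u₂ v₂ = false) (s₃₃ : G.sign u₃ v₃ = false) :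
    G.HasF4 := by
  have e₂ := side_eq_of_adj_of_adj h₂₁ h₁₁
  have e₃ := side_eq_of_adj_of_adj h₃₁ h₁₁
  have f₁ := side_eq_not_of_adj h₁₁
  have f₂ := side_eq_not_of_adj h₁₂
  have f₃ := side_eq_not_of_adj h₁₃
  have hd : ([u₁, u₂, u₃] ++ [v₁, v₂, v₃]).Pairwise (· ≠ ·) := pairwise_ne_append G u₁
    (by simp [*]) (by simp [*]) (by simp [e₂, e₃]) (by simp [f₁, f₂, f₃])
  refine ⟨u₁, u₂, u₃, v₁, v₂, v₃, hd, h₁₁, h₁₂, h₁₃, h₂₁, h₂₂, h₂₃, h₃₁, h₃₂, h₃₃,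
    ?_, ?_, ?_, ?_, ?_, ?_, s₁₁, s₂₂, s₃₃⟩ <;>
  exact not_adj_of_side_eq (by simp [e₂, e₃, f₁, f₂, f₃])

lemma hasF5_of_adj {x₁ x₂ x₃ y₁ y₂ y₃ : V} (hx : x₂ ≠ x₃) (hy : y₁ ≠ y₂)
    (h₁₁ : G.Adj x₁ y₁) (h₁₂ : G.Adj x₁ y₂) (n₁₃ : ¬ G.Adj x₁ y₃)
    (h₂₁ : G.Adj x₂ y₁) (h₂₂ : G.Adj x₂ y₂) (h₂₃ : G.Adj x₂ y₃)
    (h₃₁ : G.Adj x₃ y₁) (h₃₂ : G.Adj x₃ y₂) (h₃₃ : G.Adj x₃ y₃)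
    (s₂₁ : G.sign x₂ y₁ = false) (s₃₂ : G.sign x₃ y₂ = false) : G.HasF5 := by
  have e₂ := side_eq_of_adj_of_adj h₂₁ h₁₁
  have e₃ := side_eq_of_adj_of_adj h₃₁ h₁₁
  have f₁ := side_eq_not_of_adj h₁₁
  have f₂ := side_eq_not_of_adj h₁₂
  have f₃ : G.side y₃ = !G.side x₁ := e₂ ▸ side_eq_not_of_adj h₂₃
  have : x₁ ≠ x₂ := fun h => n₁₃ (h ▸ h₂₃)
  have : x₁ ≠ x₃ := fun h => n₁₃ (h ▸ h₃₃)
  have : y₁ ≠ y₃ := fun h => n₁₃ (h ▸ h₁₁)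
  have : y₂ ≠ y₃ := fun h => n₁₃ (h ▸ h₁₂)
  have hd : ([x₁, x₂, x₃] ++ [y₁, y₂, y₃]).Pairwise (· ≠ ·) := pairwise_ne_append G x₁
    (by simp [*]) (by simp [*]) (by simp [e₂, e₃]) (by simp [f₁, f₂, f₃])
  refine ⟨x₁, x₂, x₃, y₁, y₂, y₃, hd, h₁₁, h₁₂, n₁₃, h₂₁, h₂₂, h₂₃, h₃₁, h₃₂, h₃₃,
    ?_, ?_, ?_, ?_, ?_, ?_, s₂₁, s₃₂⟩ <;>
  exact not_adj_of_side_eq (by simp [e₂, e₃, f₁, f₂, f₃])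

lemma hasF6_of_adj {x₁ x₂ x₃ x₄ y₁ y₂ y₃ y₄ : V} (hx₁₂ : x₁ ≠ x₂) (hx₃₄ : x₃ ≠ x₄)
    (hy₁₂ : y₁ ≠ y₂) (hy₃₄ : y₃ ≠ y₄)
    (h₁₁ : G.Adj x₁ y₁) (h₁₂ : G.Adj x₁ y₂) (n₁₃ : ¬ G.Adj x₁ y₃) (n₁₄ : ¬ G.Adj x₁ y₄)
    (h₂₁ : G.Adj x₂ y₁) (h₂₂ : G.Adj x₂ y₂) (n₂₃ : ¬ G.Adj x₂ y₃) (n₂₄ : ¬ G.Adj x₂ y₄)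
    (h₃₁ : G.Adj x₃ y₁) (h₃₂ : G.Adj x₃ y₂) (h₃₃ : G.Adj x₃ y₃) (h₃₄ : G.Adj x₃ y₄)
    (h₄₁ : G.Adj x₄ y₁) (h₄₂ : G.Adj x₄ y₂) (h₄₃ : G.Adj x₄ y₃) (h₄₄ : G.Adj x₄ y₄)
    (s₁₁ : G.sign x₁ y₁ = false) (s₂₁ : G.sign x₂ y₁ = false) (s₃₂ : G.sign x₃ y₂ = false)
    (s₄₃ : G.sign x₄ y₃ = false) (s₄₄ : G.sign x₄ y₄ = false) : G.HasF6 := by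
  have e₂ := side_eq_of_adj_of_adj h₂₁ h₁₁
  have e₃ := side_eq_of_adj_of_adj h₃₁ h₁₁
  have e₄ := side_eq_of_adj_of_adj h₄₁ h₁₁
  have f₁ := side_eq_not_of_adj h₁₁
  have f₂ := side_eq_not_of_adj h₁₂
  have f₃ : G.side y₃ = !G.side x₁ := e₃ ▸ side_eq_not_of_adj h₃₃
  have f₄ : G.side y₄ = !G.side x₁ := e₃ ▸ side_eq_not_of_adj h₃₄
  have : x₁ ≠ x₃ := fun h => n₁₃ (h ▸ h₃₃)
  have : x₁ ≠ x₄ := fun h => n₁₃ (h ▸ h₄₃)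
  have : x₂ ≠ x₃ := fun h => n₂₃ (h ▸ h₃₃)
  have : x₂ ≠ x₄ := fun h => n₂₃ (h ▸ h₄₃)
  have : y₁ ≠ y₃ := fun h => n₁₃ (h ▸ h₁₁)
  have : y₁ ≠ y₄ := fun h => n₁₄ (h ▸ h₁₁)
  have : y₂ ≠ y₃ := fun h => n₁₃ (h ▸ h₁₂)
  have : y₂ ≠ y₄ := fun h => n₁₄ (h ▸ h₁₂)
  have hd : ([x₁, x₂, x₃, x₄] ++ [y₁, y₂, y₃, y₄]).Pairwise (· ≠ ·) := pairwise_ne_append G x₁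
    (by simp [*]) (by simp [*]) (by simp [e₂, e₃, e₄]) (by simp [f₁, f₂, f₃, f₄])
  refine ⟨x₁, x₂, x₃, x₄, y₁, y₂, y₃, y₄, hd,
    h₁₁, h₁₂, n₁₃, n₁₄, h₂₁, h₂₂, n₂₃, n₂₄, h₃₁, h₃₂, h₃₃, h₃₄, h₄₁, h₄₂, h₄₃, h₄₄,
    ?_, ?_, ?_, ?_, ?_, ?_, ?_, ?_, ?_, ?_, ?_, ?_, s₁₁, s₂₁, s₃₂, s₄₃, s₄₄⟩ <;>
  exact not_adj_of_side_eq (by simp [e₂, e₃, e₄, f₁, f₂, f₃, f₄])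

structure FreeOfF1To6 (G : SignedBigraph V) : Prop where
  not_hasF1 : ¬ G.HasF1
  not_hasF2 : ¬ G.HasF2
  not_hasF3 : ¬ G.HasF3
  not_hasF4 : ¬ G.HasF4
  not_hasF5 : ¬ G.HasF5
  not_hasF6 : ¬ G.HasF6

lemma freeOfF1To6_iff :
    G.FreeOfF1To6 ↔ ¬ (G.HasF1 ∨ G.HasF2 ∨ G.HasF3 ∨ G.HasF4 ∨ G.HasF5 ∨ G.HasF6) := by
  simp only [not_or]
  exact ⟨fun ⟨h₁, h₂, h₃, h₄, h₅, h₆⟩ => ⟨h₁, h₂, h₃, h₄, h₅, h₆⟩,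
    fun ⟨h₁, h₂, h₃, h₄, h₅, h₆⟩ => ⟨h₁, h₂, h₃, h₄, h₅, h₆⟩⟩

/-! ### Signed simplicial edges -/

lemma deleteEdges_adj {s : Set (Sym2 V)} : (G.deleteEdges s).Adj a b ↔ G.Adj a b ∧ s(a, b) ∉ s :=
  SimpleGraph.deleteEdges_adj

lemma deleteEdges_empty : G.deleteEdges ∅ = G := by
  cases G
  simp [deleteEdges]

lemma deleteEdges_deleteEdges (s t : Set (Sym2 V)) :
    (G.deleteEdges s).deleteEdges t = G.deleteEdges (s ∪ t) := by
  simp [deleteEdges, SimpleGraph.deleteEdges_deleteEdges]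

lemma ncard_edgeSet_deleteEdges_lt [Finite V] {s : Set (Sym2 V)} (hab : G.Adj a b)
    (hs : s(a, b) ∈ s) : (G.deleteEdges s).graph.edgeSet.ncard < G.graph.edgeSet.ncard := by
  refine Set.ncard_lt_ncard ?_ (Set.toFinite _)
  rw [show (G.deleteEdges s).graph = G.graph.deleteEdges s from rfl,
    SimpleGraph.edgeSet_deleteEdges]
  exact Set.sdiff_ssubset_left_iff.2 ⟨s(a, b), hab, hs⟩

def isolate (G : SignedBigraph V) (S : Set V) : SignedBigraph V :=
  G.deleteEdges {e | ∃ w ∈ S, w ∈ e}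

lemma isolate_adj {S : Set V} : (G.isolate S).Adj a b ↔ G.Adj a b ∧ a ∉ S ∧ b ∉ S := by
  simp only [isolate, deleteEdges_adj]
  grind

lemma mem_edgeNbhd : c ∈ G.edgeNbhd a b ↔ (G.Adj a c ∨ G.Adj b c) ∧ c ≠ a ∧ c ≠ b := by
  simp [edgeNbhd, SimpleGraph.mem_neighborSet, Adj]

lemma signedSimplicial_iff : G.SignedSimplicial a b ↔ G.Adj a b ∧
    ∀ c ∈ G.nbhd a, c ≠ b → ∀ d ∈ G.nbhd b, d ≠ a → G.Adj c d ∧ G.sign c d = true := by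
  refine ⟨fun ⟨hab, h⟩ => ⟨hab, fun c hc hcb d hd hda => h c ?_ d ?_ ?_⟩,
    fun ⟨hab, h⟩ => ⟨hab, ?_⟩⟩
  · exact mem_edgeNbhd.2 ⟨.inl hc, hc.ne.symm, hcb⟩
  · exact mem_edgeNbhd.2 ⟨.inr hd, hda, hd.ne.symm⟩
  · rw [side_eq_not_of_adj hc, side_eq_not_of_adj hd, side_eq_not_of_adj hab]
    cases G.side a <;> simp
  intro c hc d hd hcd
  obtain ⟨hac | hbc, hca, hcb⟩ := mem_edgeNbhd.1 hc <;>
    obtain ⟨had | hbd, hda, hdb⟩ := mem_edgeNbhd.1 hd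
  · exact absurd (side_eq_of_adj_of_adj hac.symm had.symm) hcd
  · exact h c hac hcb d hbd hda
  · obtain ⟨hdc, hs⟩ := h d had hdb c hbc hca
    exact ⟨hdc.symm, G.sign_symm c d ▸ hs⟩
  · exact absurd (side_eq_of_adj_of_adj hbc.symm hbd.symm) hcd

lemma SignedSimplicial.symm (h : G.SignedSimplicial a b) : G.SignedSimplicial b a := by
  obtain ⟨hab, h⟩ := signedSimplicial_iff.1 h
  refine signedSimplicial_iff.2 ⟨hab.symm, fun c hc hca d hd hdb => ?_⟩
  obtain ⟨hdc, hs⟩ := h d hd hdb c hc hca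
  exact ⟨hdc.symm, G.sign_symm c d ▸ hs⟩

lemma SignedSimplicial.of_sym2_eq (h : G.SignedSimplicial a b) (he : s(a, b) = s(c, d)) :
    G.SignedSimplicial c d := by
  rcases Sym2.eq_iff.1 he with ⟨rfl, rfl⟩ | ⟨rfl, rfl⟩
  exacts [h, h.symm]

lemma SignedSimplicial.of_isolate {S : Set V} (h : (G.isolate S).SignedSimplicial a b)
    (ha : ∀ c ∈ G.nbhd a, c ∉ S) (hb : ∀ d ∈ G.nbhd b, d ∉ S) : G.SignedSimplicial a b := by
  obtain ⟨hab, h⟩ := signedSimplicial_iff.1 h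
  obtain ⟨hab, haS, hbS⟩ := isolate_adj.1 hab
  refine signedSimplicial_iff.2 ⟨hab, fun c hc hcb d hd hda => ?_⟩
  obtain ⟨hcd, hs⟩ := h c (isolate_adj.2 ⟨hc, haS, ha c hc⟩) hcb d
    (isolate_adj.2 ⟨hd, hbS, hb d hd⟩) hda
  exact ⟨(isolate_adj.1 hcd).1, hs⟩

lemma exists_negative_of_not_signedSimplicial (hb : b ∈ G.nbhd r)
    (hdom : ∀ d ∈ G.nbhd b, G.nbhd r ⊆ G.nbhd d) (h : ¬ G.SignedSimplicial r b) :
    ∃ c ∈ G.nbhd r, c ≠ b ∧ ∃ d ∈ G.nbhd b, d ≠ r ∧ G.sign c d = false := by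
  by_contra hc
  push Not at hc
  exact h (signedSimplicial_iff.2 ⟨hb, fun c hc' hcb d hd hdr =>
    ⟨(hdom d hd hc').symm, by simpa using hc c hc' hcb d hd hdr⟩⟩)

lemma IsChordal.of_deleteEdges (h : G.SignedSimplicial u v)
    (hC : (G.deleteEdges {s(u, v)}).IsChordal) : G.IsChordal := by
  obtain ⟨l, hnd, hl, hss⟩ := hC
  have hl' : ∀ e, e ∈ l ↔ e ∈ G.graph.edgeSet ∧ e ≠ s(u, v) := fun e => by
    rw [← hl, show (G.deleteEdges _).graph = G.graph.deleteEdges _ from rfl,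
      SimpleGraph.edgeSet_deleteEdges]
    simp
  refine ⟨s(u, v) :: l, List.nodup_cons.2 ⟨fun hm => ((hl' _).1 hm).2 rfl, hnd⟩,
    fun e => ?_, ?_⟩
  · by_cases he : e = s(u, v)
    · subst he
      exact ⟨fun _ => List.mem_cons_self, fun _ => h.1⟩
    · simp [hl', he]
  rintro (_ | i) hi
  · exact ⟨u, v, rfl, by simpa [deleteEdges_empty] using h⟩
  · obtain ⟨a, b, hab, hss⟩ := hss i (by simpa using hi)
    refine ⟨a, b, by simpa using hab, ?_⟩
    convert hss using 1
    rw [deleteEdges_deleteEdges]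
    congr 1
    ext
    simp [List.take_succ_cons]

/-! ### Chordal signed bigraphs are `F₁`–`F₆`-free -/

/-- The edges of `P` all survive until the first of them is eliminated, and at that moment the
witnesses `c, d` contradict its simpliciality. -/
lemma not_isChordal_of_forall_blocked (P : Set (Sym2 V)) (hP : P.Nonempty)
    (hblock : ∀ e ∈ P, ∃ a b c d, e = s(a, b) ∧ G.Adj a b ∧ s(a, c) ∈ P ∧ s(d, b) ∈ P ∧
      c ≠ b ∧ d ≠ a ∧ (¬ G.Adj d c ∨ G.sign d c = false)) : ¬ G.IsChordal := by
  classical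
  rintro ⟨l, -, hl, hss⟩
  have hPE : ∀ e ∈ P, e ∈ G.graph.edgeSet := fun e he => by
    obtain ⟨a, b, -, -, rfl, hab, -⟩ := hblock e he
    exact hab
  have hex : ∃ i, ∃ h : i < l.length, l[i] ∈ P := by
    obtain ⟨e, he⟩ := hP
    obtain ⟨i, hi, rfl⟩ := List.getElem_of_mem ((hl e).1 (hPE e he))
    exact ⟨i, hi, he⟩
  obtain ⟨hi, hiP⟩ := Nat.find_spec hex
  obtain ⟨a', b', he', hss'⟩ := hss _ hi
  obtain ⟨a, b, c, d, he, -, hac, hdb, hcb, hda, hbad⟩ := hblock _ hiP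
  have hkeep : ∀ {x y}, s(x, y) ∈ P →
      (G.deleteEdges {e | e ∈ l.take (Nat.find hex)}).Adj x y := by
    intro x y hxy
    refine deleteEdges_adj.2 ⟨hPE _ hxy, fun hmem => ?_⟩
    obtain ⟨j, hj, hje⟩ := List.mem_take_iff_getElem.1 hmem
    exact Nat.find_min hex (lt_of_lt_of_le hj (min_le_left _ _))
      ⟨lt_of_lt_of_le hj (min_le_right _ _), hje ▸ hxy⟩
  rw [List.get_eq_getElem, he] at he'
  obtain ⟨-, h⟩ := signedSimplicial_iff.1 (hss'.of_sym2_eq he'.symm)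
  obtain ⟨hcd, hs⟩ := h c (hkeep hac) hcb d (hkeep hdb).symm hda
  rcases hbad with hn | hn
  · exact hn (deleteEdges_adj.1 hcd).1.symm
  · rw [G.sign_symm] at hn
    exact absurd hs (by simp [deleteEdges, hn])

lemma HasF1.not_isChordal (h : G.HasF1) : ¬ G.IsChordal := by
  obtain ⟨u₁, u₂, v₁, v₂, hd, h₁₁, h₁₂, h₂₁, h₂₂, -, -, s₁₁, s₁₂, s₂₁, s₂₂⟩ := h
  simp only [List.pairwise_cons, List.mem_cons, List.not_mem_nil, or_false, forall_eq_or_imp,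
    forall_eq, List.Pairwise.nil, and_true] at hd
  refine not_isChordal_of_forall_blocked {s(u₁, v₁), s(u₁, v₂), s(u₂, v₁), s(u₂, v₂)}
    ⟨_, Set.mem_insert _ _⟩ ?_
  simp only [Set.forall_mem_insert, Set.mem_singleton_iff, forall_eq]
  refine ⟨⟨u₁, v₁, v₂, u₂, rfl, h₁₁, ?_, ?_, ?_, ?_, .inr s₂₂⟩,
    ⟨u₁, v₂, v₁, u₂, rfl, h₁₂, ?_, ?_, ?_, ?_, .inr s₂₁⟩,
    ⟨u₂, v₁, v₂, u₁, rfl, h₂₁, ?_, ?_, ?_, ?_, .inr s₁₂⟩,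
    ⟨u₂, v₂, v₁, u₁, rfl, h₂₂, ?_, ?_, ?_, ?_, .inr s₁₁⟩⟩
  all_goals first | simp only [Set.mem_insert_iff, Set.mem_singleton_iff, true_or, or_true] | grind

lemma HasF2.not_isChordal (h : G.HasF2) : ¬ G.IsChordal := by
  obtain ⟨u₁, u₂, v₁, v₂, v₃, hd, h₁₁, h₁₂, h₁₃, h₂₁, h₂₂, h₂₃, -, -, -, -,
    s₁₁, s₁₂, s₂₂, s₂₃⟩ := h
  simp only [List.pairwise_cons, List.mem_cons, List.not_mem_nil, or_false, forall_eq_or_imp,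
    forall_eq, List.Pairwise.nil, and_true] at hd
  refine not_isChordal_of_forall_blocked {s(u₁, v₁), s(u₁, v₂), s(u₁, v₃), s(u₂, v₁),
    s(u₂, v₂), s(u₂, v₃)} ⟨_, Set.mem_insert _ _⟩ ?_
  simp only [Set.forall_mem_insert, Set.mem_singleton_iff, forall_eq]
  refine ⟨⟨u₁, v₁, v₂, u₂, rfl, h₁₁, ?_, ?_, ?_, ?_, .inr s₂₂⟩,
    ⟨u₁, v₂, v₃, u₂, rfl, h₁₂, ?_, ?_, ?_, ?_, .inr s₂₃⟩,
    ⟨u₁, v₃, v₂, u₂, rfl, h₁₃, ?_, ?_, ?_, ?_, .inr s₂₂⟩,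
    ⟨u₂, v₁, v₂, u₁, rfl, h₂₁, ?_, ?_, ?_, ?_, .inr s₁₂⟩,
    ⟨u₂, v₂, v₁, u₁, rfl, h₂₂, ?_, ?_, ?_, ?_, .inr s₁₁⟩,
    ⟨u₂, v₃, v₁, u₁, rfl, h₂₃, ?_, ?_, ?_, ?_, .inr s₁₁⟩⟩
  all_goals first | simp only [Set.mem_insert_iff, Set.mem_singleton_iff, true_or, or_true] | grind

lemma HasF3.not_isChordal (h : G.HasF3) : ¬ G.IsChordal := by
  obtain ⟨u₁, u₂, v₁, v₂, v₃, v₄, hd, h₁₁, h₁₂, h₁₃, h₁₄, h₂₁, h₂₂, h₂₃, h₂₄,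
    -, -, -, -, -, -, -, s₁₁, s₁₂, s₂₃, s₂₄⟩ := h
  simp only [List.pairwise_cons, List.mem_cons, List.not_mem_nil, or_false, forall_eq_or_imp,
    forall_eq, List.Pairwise.nil, and_true] at hd
  refine not_isChordal_of_forall_blocked {s(u₁, v₁), s(u₁, v₂), s(u₁, v₃), s(u₁, v₄),
    s(u₂, v₁), s(u₂, v₂), s(u₂, v₃), s(u₂, v₄)} ⟨_, Set.mem_insert _ _⟩ ?_
  simp only [Set.forall_mem_insert, Set.mem_singleton_iff, forall_eq]
  refine ⟨⟨u₁, v₁, v₃, u₂, rfl, h₁₁, ?_, ?_, ?_, ?_, .inr s₂₃⟩,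
    ⟨u₁, v₂, v₃, u₂, rfl, h₁₂, ?_, ?_, ?_, ?_, .inr s₂₃⟩,
    ⟨u₁, v₃, v₄, u₂, rfl, h₁₃, ?_, ?_, ?_, ?_, .inr s₂₄⟩,
    ⟨u₁, v₄, v₃, u₂, rfl, h₁₄, ?_, ?_, ?_, ?_, .inr s₂₃⟩,
    ⟨u₂, v₁, v₂, u₁, rfl, h₂₁, ?_, ?_, ?_, ?_, .inr s₁₂⟩,
    ⟨u₂, v₂, v₁, u₁, rfl, h₂₂, ?_, ?_, ?_, ?_, .inr s₁₁⟩,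
    ⟨u₂, v₃, v₁, u₁, rfl, h₂₃, ?_, ?_, ?_, ?_, .inr s₁₁⟩,
    ⟨u₂, v₄, v₁, u₁, rfl, h₂₄, ?_, ?_, ?_, ?_, .inr s₁₁⟩⟩
  all_goals first | simp only [Set.mem_insert_iff, Set.mem_singleton_iff, true_or, or_true] | grind

lemma HasF4.not_isChordal (h : G.HasF4) : ¬ G.IsChordal := by
  obtain ⟨u₁, u₂, u₃, v₁, v₂, v₃, hd, h₁₁, h₁₂, h₁₃, h₂₁, h₂₂, h₂₃, h₃₁, h₃₂, h₃₃,
    -, -, -, -, -, -, s₁₁, s₂₂, s₃₃⟩ := h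
  simp only [List.pairwise_cons, List.mem_cons, List.not_mem_nil, or_false, forall_eq_or_imp,
    forall_eq, List.Pairwise.nil, and_true] at hd
  refine not_isChordal_of_forall_blocked {s(u₁, v₁), s(u₁, v₂), s(u₁, v₃), s(u₂, v₁),
    s(u₂, v₂), s(u₂, v₃), s(u₃, v₁), s(u₃, v₂), s(u₃, v₃)} ⟨_, Set.mem_insert _ _⟩ ?_
  simp only [Set.forall_mem_insert, Set.mem_singleton_iff, forall_eq]
  refine ⟨⟨u₁, v₁, v₂, u₂, rfl, h₁₁, ?_, ?_, ?_, ?_, .inr s₂₂⟩,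
    ⟨u₁, v₂, v₃, u₃, rfl, h₁₂, ?_, ?_, ?_, ?_, .inr s₃₃⟩,
    ⟨u₁, v₃, v₂, u₂, rfl, h₁₃, ?_, ?_, ?_, ?_, .inr s₂₂⟩,
    ⟨u₂, v₁, v₃, u₃, rfl, h₂₁, ?_, ?_, ?_, ?_, .inr s₃₃⟩,
    ⟨u₂, v₂, v₁, u₁, rfl, h₂₂, ?_, ?_, ?_, ?_, .inr s₁₁⟩,
    ⟨u₂, v₃, v₁, u₁, rfl, h₂₃, ?_, ?_, ?_, ?_, .inr s₁₁⟩,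
    ⟨u₃, v₁, v₂, u₂, rfl, h₃₁, ?_, ?_, ?_, ?_, .inr s₂₂⟩,
    ⟨u₃, v₂, v₁, u₁, rfl, h₃₂, ?_, ?_, ?_, ?_, .inr s₁₁⟩,
    ⟨u₃, v₃, v₁, u₁, rfl, h₃₃, ?_, ?_, ?_, ?_, .inr s₁₁⟩⟩
  all_goals first | simp only [Set.mem_insert_iff, Set.mem_singleton_iff, true_or, or_true] | grind

lemma HasF5.not_isChordal (h : G.HasF5) : ¬ G.IsChordal := by
  obtain ⟨x₁, x₂, x₃, y₁, y₂, y₃, hd, h₁₁, h₁₂, n₁₃, h₂₁, h₂₂, h₂₃, h₃₁, h₃₂, h₃₃,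
    -, -, -, -, -, -, s₂₁, s₃₂⟩ := h
  simp only [List.pairwise_cons, List.mem_cons, List.not_mem_nil, or_false, forall_eq_or_imp,
    forall_eq, List.Pairwise.nil, and_true] at hd
  refine not_isChordal_of_forall_blocked {s(x₁, y₁), s(x₁, y₂), s(x₂, y₁), s(x₂, y₂),
    s(x₂, y₃), s(x₃, y₁), s(x₃, y₂), s(x₃, y₃)} ⟨_, Set.mem_insert _ _⟩ ?_
  simp only [Set.forall_mem_insert, Set.mem_singleton_iff, forall_eq]
  refine ⟨⟨x₁, y₁, y₂, x₃, rfl, h₁₁, ?_, ?_, ?_, ?_, .inr s₃₂⟩,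
    ⟨x₁, y₂, y₁, x₂, rfl, h₁₂, ?_, ?_, ?_, ?_, .inr s₂₁⟩,
    ⟨x₂, y₁, y₂, x₃, rfl, h₂₁, ?_, ?_, ?_, ?_, .inr s₃₂⟩,
    ⟨x₂, y₂, y₃, x₁, rfl, h₂₂, ?_, ?_, ?_, ?_, .inl n₁₃⟩,
    ⟨x₂, y₃, y₂, x₃, rfl, h₂₃, ?_, ?_, ?_, ?_, .inr s₃₂⟩,
    ⟨x₃, y₁, y₃, x₁, rfl, h₃₁, ?_, ?_, ?_, ?_, .inl n₁₃⟩,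
    ⟨x₃, y₂, y₁, x₂, rfl, h₃₂, ?_, ?_, ?_, ?_, .inr s₂₁⟩,
    ⟨x₃, y₃, y₁, x₂, rfl, h₃₃, ?_, ?_, ?_, ?_, .inr s₂₁⟩⟩
  all_goals first | simp only [Set.mem_insert_iff, Set.mem_singleton_iff, true_or, or_true] | grind

lemma HasF6.not_isChordal (h : G.HasF6) : ¬ G.IsChordal := by
  obtain ⟨x₁, x₂, x₃, x₄, y₁, y₂, y₃, y₄, hd, h₁₁, h₁₂, n₁₃, -, h₂₁, h₂₂, -, -,
    h₃₁, h₃₂, h₃₃, h₃₄, h₄₁, h₄₂, h₄₃, h₄₄, -, -, -, -, -, -, -, -, -, -, -, -,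
    s₁₁, s₂₁, s₃₂, s₄₃, s₄₄⟩ := h
  simp only [List.pairwise_cons, List.mem_cons, List.not_mem_nil, or_false, forall_eq_or_imp,
    forall_eq, List.Pairwise.nil, and_true] at hd
  refine not_isChordal_of_forall_blocked {s(x₁, y₁), s(x₁, y₂), s(x₂, y₁), s(x₂, y₂),
    s(x₃, y₁), s(x₃, y₂), s(x₃, y₃), s(x₃, y₄), s(x₄, y₁), s(x₄, y₂), s(x₄, y₃), s(x₄, y₄)}
    ⟨_, Set.mem_insert _ _⟩ ?_
  simp only [Set.forall_mem_insert, Set.mem_singleton_iff, forall_eq]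
  refine ⟨⟨x₁, y₁, y₂, x₃, rfl, h₁₁, ?_, ?_, ?_, ?_, .inr s₃₂⟩,
    ⟨x₁, y₂, y₁, x₂, rfl, h₁₂, ?_, ?_, ?_, ?_, .inr s₂₁⟩,
    ⟨x₂, y₁, y₂, x₃, rfl, h₂₁, ?_, ?_, ?_, ?_, .inr s₃₂⟩,
    ⟨x₂, y₂, y₁, x₁, rfl, h₂₂, ?_, ?_, ?_, ?_, .inr s₁₁⟩,
    ⟨x₃, y₁, y₃, x₁, rfl, h₃₁, ?_, ?_, ?_, ?_, .inl n₁₃⟩,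
    ⟨x₃, y₂, y₃, x₁, rfl, h₃₂, ?_, ?_, ?_, ?_, .inl n₁₃⟩,
    ⟨x₃, y₃, y₄, x₄, rfl, h₃₃, ?_, ?_, ?_, ?_, .inr s₄₄⟩,
    ⟨x₃, y₄, y₃, x₄, rfl, h₃₄, ?_, ?_, ?_, ?_, .inr s₄₃⟩,
    ⟨x₄, y₁, y₃, x₁, rfl, h₄₁, ?_, ?_, ?_, ?_, .inl n₁₃⟩,
    ⟨x₄, y₂, y₃, x₁, rfl, h₄₂, ?_, ?_, ?_, ?_, .inl n₁₃⟩,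
    ⟨x₄, y₃, y₂, x₃, rfl, h₄₃, ?_, ?_, ?_, ?_, .inr s₃₂⟩,
    ⟨x₄, y₄, y₂, x₃, rfl, h₄₄, ?_, ?_, ?_, ?_, .inr s₃₂⟩⟩
  all_goals first | simp only [Set.mem_insert_iff, Set.mem_singleton_iff, true_or, or_true] | grind

lemma IsChordal.freeOfF1To6 (h : G.IsChordal) : G.FreeOfF1To6 :=
  ⟨fun hF => hF.not_isChordal h, fun hF => hF.not_isChordal h, fun hF => hF.not_isChordal h,
    fun hF => hF.not_isChordal h, fun hF => hF.not_isChordal h, fun hF => hF.not_isChordal h⟩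

/-! ### Deleting simplicial edges -/

def IsSimplicialDeletion (G : SignedBigraph V) (s : Set (Sym2 V)) : Prop :=
  ∀ a b c d, G.Adj a b → s(a, b) ∈ s → (G.deleteEdges s).Adj a c → (G.deleteEdges s).Adj b d →
    (G.deleteEdges s).Adj c d ∧ G.sign c d = true

section IsSimplicialDeletion

variable {s : Set (Sym2 V)}

lemma IsSimplicialDeletion.not_adj (hs : G.IsSimplicialDeletion s)
    (hac : (G.deleteEdges s).Adj a c) (hbd : (G.deleteEdges s).Adj b d)
    (hab : ¬ (G.deleteEdges s).Adj a b) (hcd : ¬ (G.deleteEdges s).Adj c d ∨ G.sign c d = false) :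
    ¬ G.Adj a b := fun h => by
  obtain ⟨hcd', hs'⟩ := hs a b c d h (by simpa [deleteEdges_adj, h] using hab) hac hbd
  rcases hcd with hcd | hcd
  exacts [hcd hcd', by simp [hcd] at hs']

lemma not_isSeparable_deleteEdges (hns : ¬ IsSeparableGraph G.graph)
    (hs : G.IsSimplicialDeletion s) : ¬ IsSeparableGraph (G.deleteEdges s).graph := by
  rintro ⟨a, b, c, d, hd, hab, hcd, hac, had, hbc, hbd⟩
  exact hns ⟨a, b, c, d, hd, (deleteEdges_adj.1 hab).1, (deleteEdges_adj.1 hcd).1,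
    hs.not_adj hab hcd hac (.inl hbd), hs.not_adj hab hcd.symm had (.inl hbc),
    hs.not_adj hab.symm hcd hbc (.inl had), hs.not_adj hab.symm hcd.symm hbd (.inl hac)⟩

lemma FreeOfF1To6.deleteEdges (hF : G.FreeOfF1To6) (hs : G.IsSimplicialDeletion s) :
    (G.deleteEdges s).FreeOfF1To6 := by
  have h : ∀ {x y}, (G.deleteEdges s).Adj x y → G.Adj x y := fun hxy => (deleteEdges_adj.1 hxy).1
  refine ⟨fun hF1 => ?_, fun hF2 => ?_, fun hF3 => ?_, fun hF4 => ?_, fun hF5 => ?_, fun hF6 => ?_⟩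
  · obtain ⟨u₁, u₂, v₁, v₂, hd, h₁₁, h₁₂, h₂₁, h₂₂, -, -, hsign⟩ := hF1
    exact hF.not_hasF1 ⟨u₁, u₂, v₁, v₂, hd, h h₁₁, h h₁₂, h h₂₁, h h₂₂,
      not_adj_of_adj_of_adj (h h₁₁) (h h₂₁), not_adj_of_adj_of_adj (h h₁₁).symm (h h₁₂).symm, hsign⟩
  · obtain ⟨u₁, u₂, v₁, v₂, v₃, hd, h₁₁, h₁₂, h₁₃, h₂₁, h₂₂, h₂₃, -, -, -, -, hsign⟩ := hF2
    exact hF.not_hasF2 ⟨u₁, u₂, v₁, v₂, v₃, hd, h h₁₁, h h₁₂, h h₁₃, h h₂₁, h h₂₂, h h₂₃,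
      not_adj_of_adj_of_adj (h h₁₁) (h h₂₁), not_adj_of_adj_of_adj (h h₁₁).symm (h h₁₂).symm,
      not_adj_of_adj_of_adj (h h₁₁).symm (h h₁₃).symm,
      not_adj_of_adj_of_adj (h h₁₂).symm (h h₁₃).symm, hsign⟩
  · obtain ⟨u₁, u₂, v₁, v₂, v₃, v₄, hd, h₁₁, h₁₂, h₁₃, h₁₄, h₂₁, h₂₂, h₂₃, h₂₄,
      -, -, -, -, -, -, -, hsign⟩ := hF3
    exact hF.not_hasF3 ⟨u₁, u₂, v₁, v₂, v₃, v₄, hd, h h₁₁, h h₁₂, h h₁₃, h h₁₄, h h₂₁, h h₂₂,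
      h h₂₃, h h₂₄, not_adj_of_adj_of_adj (h h₁₁) (h h₂₁),
      not_adj_of_adj_of_adj (h h₁₁).symm (h h₁₂).symm,
      not_adj_of_adj_of_adj (h h₁₁).symm (h h₁₃).symm,
      not_adj_of_adj_of_adj (h h₁₁).symm (h h₁₄).symm,
      not_adj_of_adj_of_adj (h h₁₂).symm (h h₁₃).symm,
      not_adj_of_adj_of_adj (h h₁₂).symm (h h₁₄).symm,
      not_adj_of_adj_of_adj (h h₁₃).symm (h h₁₄).symm, hsign⟩
  · obtain ⟨u₁, u₂, u₃, v₁, v₂, v₃, hd, h₁₁, h₁₂, h₁₃, h₂₁, h₂₂, h₂₃, h₃₁, h₃₂, h₃₃,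
      -, -, -, -, -, -, hsign⟩ := hF4
    exact hF.not_hasF4 ⟨u₁, u₂, u₃, v₁, v₂, v₃, hd, h h₁₁, h h₁₂, h h₁₃, h h₂₁, h h₂₂, h h₂₃,
      h h₃₁, h h₃₂, h h₃₃, not_adj_of_adj_of_adj (h h₁₁) (h h₂₁),
      not_adj_of_adj_of_adj (h h₁₁) (h h₃₁), not_adj_of_adj_of_adj (h h₂₁) (h h₃₁),
      not_adj_of_adj_of_adj (h h₁₁).symm (h h₁₂).symm,
      not_adj_of_adj_of_adj (h h₁₁).symm (h h₁₃).symm,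
      not_adj_of_adj_of_adj (h h₁₂).symm (h h₁₃).symm, hsign⟩
  · obtain ⟨x₁, x₂, x₃, y₁, y₂, y₃, hd, h₁₁, h₁₂, n₁₃, h₂₁, h₂₂, h₂₃, h₃₁, h₃₂, h₃₃,
      -, -, -, -, -, -, s₂₁, s₃₂⟩ := hF5
    simp only [List.pairwise_cons, List.mem_cons, List.not_mem_nil, or_false, forall_eq_or_imp,
      forall_eq, List.Pairwise.nil, and_true] at hd
    exact hF.not_hasF5 (hasF5_of_adj (by grind) (by grind) (h h₁₁) (h h₁₂)
      (hs.not_adj h₁₁ h₂₃.symm n₁₃ (.inr (sign_eq_false_symm s₂₁)))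
      (h h₂₁) (h h₂₂) (h h₂₃) (h h₃₁) (h h₃₂) (h h₃₃) s₂₁ s₃₂)
  · obtain ⟨x₁, x₂, x₃, x₄, y₁, y₂, y₃, y₄, hd, h₁₁, h₁₂, n₁₃, n₁₄, h₂₁, h₂₂, n₂₃, n₂₄,
      h₃₁, h₃₂, h₃₃, h₃₄, h₄₁, h₄₂, h₄₃, h₄₄, -, -, -, -, -, -, -, -, -, -, -, -,
      s₁₁, s₂₁, s₃₂, s₄₃, s₄₄⟩ := hF6
    simp only [List.pairwise_cons, List.mem_cons, List.not_mem_nil, or_false, forall_eq_or_imp,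
      forall_eq, List.Pairwise.nil, and_true] at hd
    have hneg : G.sign y₂ x₃ = false := sign_eq_false_symm s₃₂
    exact hF.not_hasF6 (hasF6_of_adj (by grind) (by grind) (by grind) (by grind)
      (h h₁₁) (h h₁₂) (hs.not_adj h₁₂ h₃₃.symm n₁₃ (.inr hneg))
      (hs.not_adj h₁₂ h₃₄.symm n₁₄ (.inr hneg)) (h h₂₁) (h h₂₂)
      (hs.not_adj h₂₂ h₃₃.symm n₂₃ (.inr hneg)) (hs.not_adj h₂₂ h₃₄.symm n₂₄ (.inr hneg))
      (h h₃₁) (h h₃₂) (h h₃₃) (h h₃₄) (h h₄₁) (h h₄₂) (h h₄₃) (h h₄₄) s₁₁ s₂₁ s₃₂ s₄₃ s₄₄)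

lemma isSimplicialDeletion_isolate (S : Set V) :
    G.IsSimplicialDeletion {e | ∃ w ∈ S, w ∈ e} := by
  rintro a b c d - ⟨w, hw, hwab⟩ hac hbd
  rcases Sym2.mem_iff.1 hwab with rfl | rfl
  exacts [absurd hw (isolate_adj.1 hac).2.1, absurd hw (isolate_adj.1 hbd).2.1]

lemma SignedSimplicial.isSimplicialDeletion (h : G.SignedSimplicial u v) :
    G.IsSimplicialDeletion {s(u, v)} := by
  intro a b c d hab he hac hbd
  obtain ⟨-, h⟩ := signedSimplicial_iff.1 (h.of_sym2_eq (Set.mem_singleton_iff.1 he).symm)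
  have hcb : c ≠ b := by rintro rfl; exact (deleteEdges_adj.1 hac).2 he
  have hda : d ≠ a := by
    rintro rfl
    exact (deleteEdges_adj.1 hbd).2 (by rwa [Sym2.eq_swap (a := b)])
  obtain ⟨hcd, hs⟩ := h c (deleteEdges_adj.1 hac).1 hcb d (deleteEdges_adj.1 hbd).1 hda
  refine ⟨deleteEdges_adj.2 ⟨hcd, fun hmem => ?_⟩, hs⟩
  rw [Set.mem_singleton_iff, ← Set.mem_singleton_iff.1 he] at hmem
  rcases Sym2.eq_iff.1 hmem with ⟨rfl, -⟩ | ⟨rfl, -⟩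
  exacts [(deleteEdges_adj.1 hac).1.ne rfl, hcb rfl]

end IsSimplicialDeletion

/-! ### Nested neighbourhoods -/

lemma nbhd_subset_or_subset (hns : ¬ IsSeparableGraph G.graph) (h : G.side a = G.side b) :
    G.nbhd a ⊆ G.nbhd b ∨ G.nbhd b ⊆ G.nbhd a := by
  by_contra hc
  simp only [not_or, Set.not_subset] at hc
  obtain ⟨⟨c, hac, hbc⟩, ⟨d, hbd, had⟩⟩ := hc
  have hc' : G.side c = !G.side a := side_eq_not_of_adj hac
  have hd' : G.side d = !G.side a := h ▸ side_eq_not_of_adj hbd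
  have hab : a ≠ b := by rintro rfl; exact hbc hac
  have hcd : c ≠ d := by rintro rfl; exact had hac
  refine hns ⟨a, c, b, d, ?_, hac, hbd, not_adj_of_side_eq h, had, fun h' => hbc h'.symm,
    not_adj_of_side_eq (hc'.trans hd'.symm)⟩
  simp only [List.pairwise_cons, List.mem_cons, List.not_mem_nil, or_false, forall_eq_or_imp,
    forall_eq, List.Pairwise.nil, and_true]
  grind

lemma exists_min_nbhd [Finite V] (hns : ¬ IsSeparableGraph G.graph) {T : Set V}
    (hT : T.Nonempty) (hside : ∀ x ∈ T, ∀ y ∈ T, G.side x = G.side y) :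
    ∃ t ∈ T, ∀ r ∈ T, G.nbhd t ⊆ G.nbhd r := by
  obtain ⟨t, ht, hmin⟩ := Set.exists_min_image T (fun x => (G.nbhd x).ncard) (Set.toFinite _) hT
  refine ⟨t, ht, fun r hr => ?_⟩
  rcases nbhd_subset_or_subset hns (hside t ht r hr) with h | h
  · exact h
  · exact (Set.eq_of_subset_of_ncard_le h (hmin r hr) (Set.toFinite _)).symm.subset

def IsMinNbhd (G : SignedBigraph V) (x : V) : Prop :=
  (G.nbhd x).Nonempty ∧ ∀ r, G.side r = G.side x → (G.nbhd r).Nonempty → G.nbhd x ⊆ G.nbhd r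

lemma exists_isMinNbhd [Finite V] (hns : ¬ IsSeparableGraph G.graph) (hab : G.Adj a b) :
    ∃ x, G.IsMinNbhd x := by
  obtain ⟨x, ⟨hxa, hx⟩, hmin⟩ := exists_min_nbhd hns
    (T := {r | G.side r = G.side a ∧ (G.nbhd r).Nonempty}) ⟨a, rfl, b, hab⟩
    fun x hx y hy => hx.1.trans hy.1.symm
  exact ⟨x, hx, fun r hr hrn => hmin r ⟨hr.trans hxa, hrn⟩⟩

lemma IsMinNbhd.mem_nbhd_iff (hx : G.IsMinNbhd x) (ha : a ∈ G.nbhd x) :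
    r ∈ G.nbhd a ↔ G.nbhd x ⊆ G.nbhd r :=
  ⟨fun hr => hx.2 r (side_eq_of_adj_of_adj hr.symm ha) ⟨a, hr.symm⟩, fun h => (h ha).symm⟩

lemma exists_dominating_nbr [Finite V] (hns : ¬ IsSeparableGraph G.graph)
    (hr : (G.nbhd r).Nonempty) : ∃ b ∈ G.nbhd r, ∀ d ∈ G.nbhd b, G.nbhd r ⊆ G.nbhd d := by
  obtain ⟨b, hb, hmin⟩ :=
    exists_min_nbhd hns hr fun x hx y hy => side_eq_of_adj_of_adj hx.symm hy.symm
  exact ⟨b, hb, fun d hd c hc => (hmin c hc hd).symm⟩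

/-! ### Complete blocks -/

section CompleteBlock

variable {X Y : Set V}

lemma FreeOfF1To6.false_of_negative_cherries_sharing_leaf (hF : G.FreeOfF1To6)
    (hXY : ∀ x ∈ X, ∀ y ∈ Y, G.Adj x y) {u u' p q r : V} (hu : u ∈ X) (hu' : u' ∈ X)
    (hp : p ∈ Y) (hq : q ∈ Y) (hr : r ∈ Y) (huu' : u ≠ u') (hpq : p ≠ q) (hpr : p ≠ r)
    (sp : G.sign u p = false) (sq : G.sign u q = false) (sp' : G.sign u' p = false)
    (sr : G.sign u' r = false) : False := by
  rcases eq_or_ne q r with rfl | hqr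
  · exact hF.not_hasF1 (hasF1_of_adj huu' hpq (hXY u hu p hp) (hXY u hu q hq) (hXY u' hu' p hp)
      (hXY u' hu' q hq) sp sq sp' sr)
  · exact hF.not_hasF2 (hasF2_of_adj huu' hpq.symm hqr hpr (hXY u hu q hq) (hXY u hu p hp)
      (hXY u hu r hr) (hXY u' hu' q hq) (hXY u' hu' p hp) (hXY u' hu' r hr) sq sp sp' sr)

lemma FreeOfF1To6.false_of_two_negative_cherries (hF : G.FreeOfF1To6)
    (hXY : ∀ x ∈ X, ∀ y ∈ Y, G.Adj x y) {u u' p q p' q' : V} (hu : u ∈ X) (hu' : u' ∈ X)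
    (hp : p ∈ Y) (hq : q ∈ Y) (hp' : p' ∈ Y) (hq' : q' ∈ Y) (huu' : u ≠ u') (hpq : p ≠ q)
    (hpq' : p' ≠ q') (sp : G.sign u p = false) (sq : G.sign u q = false)
    (sp' : G.sign u' p' = false) (sq' : G.sign u' q' = false) : False := by
  by_cases hpp' : p = p'
  · subst hpp'
    exact hF.false_of_negative_cherries_sharing_leaf hXY hu hu' hp hq hq' huu' hpq hpq'
      sp sq sp' sq'
  by_cases hpq'' : p = q'
  · subst hpq''
    exact hF.false_of_negative_cherries_sharing_leaf hXY hu hu' hp hq hp' huu' hpq hpp'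
      sp sq sq' sp'
  by_cases hqp' : q = p'
  · subst hqp'
    exact hF.false_of_negative_cherries_sharing_leaf hXY hu hu' hq hp hq' huu' hpq.symm hpq'
      sq sp sp' sq'
  by_cases hqq' : q = q'
  · subst hqq'
    exact hF.false_of_negative_cherries_sharing_leaf hXY hu hu' hq hp hp' huu' hpq.symm hqp'
      sq sp sq' sp'
  exact hF.not_hasF3 (hasF3_of_adj huu' hpq hpp' hpq'' hqp' hqq' hpq' (hXY u hu p hp)
    (hXY u hu q hq) (hXY u hu p' hp') (hXY u hu q' hq') (hXY u' hu' p hp) (hXY u' hu' q hq)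
    (hXY u' hu' p' hp') (hXY u' hu' q' hq') sp sq sp' sq')

lemma FreeOfF1To6.false_of_crossing_negative_cherries (hF : G.FreeOfF1To6)
    (hXY : ∀ x ∈ X, ∀ y ∈ Y, G.Adj x y) {a a' a'' b b' b'' : V} (ha : a ∈ X) (ha' : a' ∈ X)
    (ha'' : a'' ∈ X) (hb : b ∈ Y) (hb' : b' ∈ Y) (hb'' : b'' ∈ Y) (haa' : a ≠ a')
    (haa'' : a ≠ a'') (hbb' : b ≠ b') (hbb'' : b ≠ b'') (sab : G.sign a b = false)
    (sab' : G.sign a b' = false) (sa'b : G.sign a' b = false)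
    (sa''b'' : G.sign a'' b'' = false) : False := by
  have hYX : ∀ y ∈ Y, ∀ x ∈ X, G.Adj y x := fun y hy x hx => (hXY x hx y hy).symm
  by_cases h' : b' = b''
  · subst h'
    exact hF.false_of_two_negative_cherries hYX hb' hb ha'' ha ha ha' hbb'.symm (Ne.symm haa'')
      haa' (sign_eq_false_symm sa''b'') (sign_eq_false_symm sab') (sign_eq_false_symm sab)
      (sign_eq_false_symm sa'b)
  by_cases h'' : a' = a''
  · subst h''
    exact hF.false_of_two_negative_cherries hXY ha' ha hb'' hb hb hb' haa'.symm hbb''.symm hbb'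
      sa''b'' sa'b sab sab'
  exact hF.not_hasF4 (hasF4_of_adj haa' haa'' h'' hbb'.symm h' hbb'' (hXY a ha b' hb')
    (hXY a ha b hb) (hXY a ha b'' hb'') (hXY a' ha' b' hb') (hXY a' ha' b hb)
    (hXY a' ha' b'' hb'') (hXY a'' ha'' b' hb') (hXY a'' ha'' b hb) (hXY a'' ha'' b'' hb'')
    sab' sa'b sa''b'')

lemma FreeOfF1To6.false_of_complete_block (hF : G.FreeOfF1To6)
    (hXY : ∀ x ∈ X, ∀ y ∈ Y, G.Adj x y)
    (hQ : ∀ x ∈ X, ∀ y ∈ Y, ∃ x' ∈ X, ∃ y' ∈ Y, x' ≠ x ∧ y' ≠ y ∧ G.sign x' y' = false)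
    {x y : V} (hx : x ∈ X) (hy : y ∈ Y) : False := by
  obtain ⟨a₁, ha₁, b₁, hb₁, -, -, s₁⟩ := hQ x hx y hy
  obtain ⟨a₂, ha₂, b₂, hb₂, ha₂₁, hb₂₁, s₂⟩ := hQ a₁ ha₁ b₁ hb₁
  obtain ⟨a₃, ha₃, b₃, hb₃, ha₃₁, hb₃₂, s₃⟩ := hQ a₁ ha₁ b₂ hb₂
  obtain ⟨a₄, ha₄, b₄, hb₄, ha₄₂, hb₄₁, s₄⟩ := hQ a₂ ha₂ b₁ hb₁
  have hYX : ∀ y ∈ Y, ∀ x ∈ X, G.Adj y x := fun y hy x hx => (hXY x hx y hy).symm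
  -- `a₃b₃` either extends `a₁b₁, a₂b₂` to a negative matching (an `F₄`) or is a second
  -- negative edge at `a₂` or at `b₁`; likewise `a₄b₄` at `a₁` or at `b₂`.
  by_cases h₃ : a₃ = a₂ ∨ b₃ = b₁
  swap
  · push Not at h₃
    exact hF.not_hasF4 (hasF4_of_adj ha₂₁.symm ha₃₁.symm (Ne.symm h₃.1) hb₂₁.symm
      (Ne.symm h₃.2) hb₃₂.symm (hXY _ ha₁ _ hb₁) (hXY _ ha₁ _ hb₂) (hXY _ ha₁ _ hb₃)
      (hXY _ ha₂ _ hb₁) (hXY _ ha₂ _ hb₂) (hXY _ ha₂ _ hb₃) (hXY _ ha₃ _ hb₁) (hXY _ ha₃ _ hb₂)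
      (hXY _ ha₃ _ hb₃) s₁ s₂ s₃)
  by_cases h₄ : a₄ = a₁ ∨ b₄ = b₂
  swap
  · push Not at h₄
    exact hF.not_hasF4 (hasF4_of_adj ha₂₁.symm (Ne.symm h₄.1) (Ne.symm ha₄₂) hb₂₁.symm
      hb₄₁.symm (Ne.symm h₄.2) (hXY _ ha₁ _ hb₁) (hXY _ ha₁ _ hb₂) (hXY _ ha₁ _ hb₄)
      (hXY _ ha₂ _ hb₁) (hXY _ ha₂ _ hb₂) (hXY _ ha₂ _ hb₄) (hXY _ ha₄ _ hb₁) (hXY _ ha₄ _ hb₂)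
      (hXY _ ha₄ _ hb₄) s₁ s₂ s₄)
  rcases h₃ with h₃ | h₃ <;> rcases h₄ with h₄ | h₄ <;> subst h₃ h₄
  · exact hF.false_of_two_negative_cherries hXY ha₁ ha₂ hb₁ hb₄ hb₂ hb₃ ha₂₁.symm hb₄₁.symm
      hb₃₂.symm s₁ s₄ s₂ s₃
  · exact hF.false_of_crossing_negative_cherries hXY ha₂ ha₄ ha₁ hb₂ hb₃ hb₁ ha₄₂.symm ha₂₁
      hb₃₂.symm hb₂₁ s₂ s₃ s₄ s₁
  · exact hF.false_of_crossing_negative_cherries hXY ha₁ ha₃ ha₂ hb₁ hb₄ hb₂ ha₃₁.symm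
      ha₂₁.symm hb₄₁.symm hb₂₁.symm s₁ s₄ s₃ s₂
  · exact hF.false_of_two_negative_cherries hYX hb₁ hb₂ ha₁ ha₃ ha₂ ha₄ hb₂₁.symm ha₃₁.symm
      ha₄₂.symm (sign_eq_false_symm s₁) (sign_eq_false_symm s₃) (sign_eq_false_symm s₂)
      (sign_eq_false_symm s₄)

end CompleteBlock

/-! ### Existence of signed simplicial edges -/

lemma FreeOfF1To6.nbhd_subset_of_sign_eq_false (hF : G.FreeOfF1To6) {x₁ x₂ x₃ y₁ y₂ : V}
    (h₁₁ : y₁ ∈ G.nbhd x₁) (h₁₂ : y₂ ∈ G.nbhd x₁) (h₂₁ : y₁ ∈ G.nbhd x₂)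
    (h₂₂ : y₂ ∈ G.nbhd x₂) (h₂₃ : G.nbhd x₂ ⊆ G.nbhd x₃) (hx : x₂ ≠ x₃) (hy : y₁ ≠ y₂)
    (s₂₁ : G.sign x₂ y₁ = false) (s₃₂ : G.sign x₃ y₂ = false) : G.nbhd x₂ ⊆ G.nbhd x₁ := by
  intro y₃ h₂₃'
  by_contra n₁₃
  exact hF.not_hasF5 (hasF5_of_adj hx hy h₁₁ h₁₂ n₁₃ h₂₁ h₂₂ h₂₃' (h₂₃ h₂₁) (h₂₃ h₂₂)
    (h₂₃ h₂₃') s₂₁ s₃₂)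

lemma exists_corner_negative (hnone : ∀ a b, ¬ G.SignedSimplicial a b) (hx₀ : G.IsMinNbhd x₀)
    (hv : v ∈ G.nbhd x₀)
    (hpos : ∀ c ∈ G.nbhd x₀, c ≠ v → ∀ d, G.nbhd x₀ ⊂ G.nbhd d → G.sign c d = true)
    (hw : G.nbhd w = G.nbhd x₀) :
    ∃ ξ, G.nbhd ξ = G.nbhd x₀ ∧ ξ ≠ w ∧ ∃ ζ ∈ G.nbhd x₀, ζ ≠ v ∧ G.sign ζ ξ = false := by
  obtain ⟨c, hc, hcv, d, hd, hdw, hcd⟩ := exists_negative_of_not_signedSimplicial (hw ▸ hv)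
    (fun d hd => hw ▸ (hx₀.mem_nbhd_iff hv).1 hd) (hnone w v)
  rw [hw] at hc
  rcases ((hx₀.mem_nbhd_iff hv).1 hd).eq_or_ssubset with h | h
  · exact ⟨d, h.symm, hdw, c, hc, hcv, hcd⟩
  · simp [hpos c hc hcv d h] at hcd

lemma FreeOfF1To6.exists_corner_cherry (hF : G.FreeOfF1To6)
    (hnone : ∀ a b, ¬ G.SignedSimplicial a b) (hx₀ : G.IsMinNbhd x₀) (hv : v ∈ G.nbhd x₀)
    (hz : G.nbhd x₀ ⊂ G.nbhd z)
    (hvz : G.sign v z = false)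
    (hpos : ∀ c ∈ G.nbhd x₀, c ≠ v → ∀ d, G.nbhd x₀ ⊂ G.nbhd d → G.sign c d = true) :
    ∃ ξ₁ ξ₂ ζ, ξ₁ ≠ ξ₂ ∧ G.nbhd ξ₁ = G.nbhd x₀ ∧ G.nbhd ξ₂ = G.nbhd x₀ ∧ ζ ∈ G.nbhd x₀ ∧
      ζ ≠ v ∧ G.sign ζ ξ₁ = false ∧ G.sign ζ ξ₂ = false := by
  obtain ⟨ξ₁, h₁, -, ζ₁, hζ₁, hζ₁v, s₁⟩ := exists_corner_negative hnone hx₀ hv hpos rfl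
  obtain ⟨ξ₂, h₂, h₂₁, ζ₂, hζ₂, hζ₂v, s₂⟩ := exists_corner_negative hnone hx₀ hv hpos h₁
  rcases eq_or_ne ζ₁ ζ₂ with rfl | hζ
  · exact ⟨ξ₁, ξ₂, ζ₁, h₂₁.symm, h₁, h₂, hζ₁, hζ₁v, s₁, s₂⟩
  have hz₁ : ξ₁ ≠ z := by rintro rfl; exact hz.ne h₁.symm
  have hz₂ : ξ₂ ≠ z := by rintro rfl; exact hz.ne h₂.symm
  exact absurd (hasF4_of_adj h₂₁.symm hz₁ hz₂ hζ hζ₁v hζ₂v (h₁.symm.subset hζ₁)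
    (h₁.symm.subset hζ₂) (h₁.symm.subset hv) (h₂.symm.subset hζ₁) (h₂.symm.subset hζ₂)
    (h₂.symm.subset hv) (hz.subset hζ₁) (hz.subset hζ₂) (hz.subset hv) (sign_eq_false_symm s₁)
    (sign_eq_false_symm s₂) (sign_eq_false_symm hvz)) hF.not_hasF4

lemma FreeOfF1To6.false_of_unique_negative [Finite V] (hF : G.FreeOfF1To6)
    (hns : ¬ IsSeparableGraph G.graph) (hnone : ∀ a b, ¬ G.SignedSimplicial a b)
    (hx₀ : G.IsMinNbhd x₀) (hξ : ξ₁ ≠ ξ₂) (hξ₁ : G.nbhd ξ₁ = G.nbhd x₀)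
    (hξ₂ : G.nbhd ξ₂ = G.nbhd x₀) (hζ : ζ ∈ G.nbhd x₀) (hζv : ζ ≠ v)
    (sξ₁ : G.sign ζ ξ₁ = false) (sξ₂ : G.sign ζ ξ₂ = false) (hv : v ∈ G.nbhd x₀)
    (hz : G.nbhd x₀ ⊂ G.nbhd z) (hvz : G.sign v z = false)
    (huniq : ∀ c ∈ G.nbhd x₀, ∀ d, G.nbhd x₀ ⊂ G.nbhd d → G.sign c d = false → d = z) :
    False := by
  have hA : ∀ {c d}, G.nbhd z ⊆ G.nbhd d → d ≠ z → G.sign c d = false → c ∉ G.nbhd x₀ :=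
    fun hd hdz hcd hc => hdz (huniq _ hc _ (hz.trans_subset hd) hcd)
  obtain ⟨b, hb, hbdom⟩ := exists_dominating_nbr hns ⟨v, hz.subset hv⟩
  obtain ⟨γ, hγ, -, δ, hδ, hδz, hγδ⟩ :=
    exists_negative_of_not_signedSimplicial hb hbdom (hnone z b)
  have hzδ := hbdom δ hδ
  have hγA : γ ∉ G.nbhd x₀ := hA hzδ hδz hγδ
  have hvγ : v ≠ γ := fun h => hγA (h ▸ hv)
  have hr : ∀ r ∈ G.nbhd γ, G.nbhd z ⊆ G.nbhd r := fun r hr =>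
    have hxr : G.nbhd x₀ ⊆ G.nbhd r := hx₀.2 r ((side_eq_of_adj_of_adj hr.symm hγ).trans
      (side_eq_of_adj_of_adj (hz.subset hv) hv)) ⟨γ, hr.symm⟩
    hF.nbhd_subset_of_sign_eq_false (hxr hv) hr.symm (hz.subset hv) hγ hzδ hδz.symm hvγ
      (sign_eq_false_symm hvz) (sign_eq_false_symm hγδ)
  obtain ⟨c, hc, hcγ, r, hr', hrz, hcr⟩ :=
    exists_negative_of_not_signedSimplicial hγ hr (hnone z γ)
  have hcA : c ∉ G.nbhd x₀ := hA (hr r hr') hrz hcr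
  have hvc : v ≠ c := fun h => hcA (h ▸ hv)
  rcases eq_or_ne r δ with rfl | hrδ
  · exact hF.not_hasF6 (hasF6_of_adj hξ hδz.symm hζv hcγ.symm (hξ₁.symm.subset hζ)
      (hξ₁.symm.subset hv) (fun h => hγA (hξ₁.subset h)) (fun h => hcA (hξ₁.subset h))
      (hξ₂.symm.subset hζ) (hξ₂.symm.subset hv) (fun h => hγA (hξ₂.subset h))
      (fun h => hcA (hξ₂.subset h)) (hz.subset hζ) (hz.subset hv) hγ hc (hzδ (hz.subset hζ))
      (hzδ (hz.subset hv)) (hzδ hγ) (hzδ hc) (sign_eq_false_symm sξ₁) (sign_eq_false_symm sξ₂)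
      (sign_eq_false_symm hvz) (sign_eq_false_symm hγδ) (sign_eq_false_symm hcr))
  · exact hF.not_hasF4 (hasF4_of_adj hδz.symm hrz.symm hrδ.symm hvγ hvc hcγ.symm
      (hz.subset hv) hγ hc (hzδ (hz.subset hv)) (hzδ hγ) (hzδ hc) (hr r hr' (hz.subset hv))
      (hr r hr' hγ) (hr r hr' hc) (sign_eq_false_symm hvz) (sign_eq_false_symm hγδ)
      (sign_eq_false_symm hcr))

/-- `hstar` is what remains of the signed simpliciality of `uv` once the vertices with
neighbourhood `N x₀` are isolated. -/
lemma FreeOfF1To6.false_of_positive_above_corner [Finite V] (hF : G.FreeOfF1To6)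
    (hns : ¬ IsSeparableGraph G.graph) (hnone : ∀ a b, ¬ G.SignedSimplicial a b)
    (hx₀ : G.IsMinNbhd x₀) (hu : G.nbhd x₀ ⊂ G.nbhd u) (hv : v ∈ G.nbhd x₀)
    (hstar : ∀ c ∈ G.nbhd u, c ≠ v → ∀ d, G.nbhd x₀ ⊂ G.nbhd d → d ≠ u → G.sign c d = true) :
    False := by
  obtain ⟨b, hb, hbdom⟩ := exists_dominating_nbr hns ⟨v, hu.subset hv⟩
  obtain ⟨c, hc, -, z, hz, hzu, hcz⟩ :=
    exists_negative_of_not_signedSimplicial hb hbdom (hnone u b)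
  have huz := hbdom z hz
  have hxz : G.nbhd x₀ ⊂ G.nbhd z := hu.trans_subset huz
  have hvc : v = c := by
    by_contra hvc
    simp [hstar c hc (Ne.symm hvc) z hxz hzu] at hcz
  subst hvc
  clear hc
  have hpos : ∀ c ∈ G.nbhd x₀, c ≠ v → ∀ d, G.nbhd x₀ ⊂ G.nbhd d → G.sign c d = true := by
    intro c hc hcv d hd
    rcases eq_or_ne d u with rfl | hdu
    · by_contra hneg
      exact hu.not_subset (hF.nbhd_subset_of_sign_eq_false hc hv (hu.subset hc) (hu.subset hv)
        huz hzu.symm hcv (sign_eq_false_symm (by simpa using hneg)) (sign_eq_false_symm hcz))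
    · exact hstar c (hu.subset hc) hcv d hd hdu
  obtain ⟨ξ₁, ξ₂, ζ, hξ, hξ₁, hξ₂, hζ, hζv, sξ₁, sξ₂⟩ :=
    hF.exists_corner_cherry hnone hx₀ hv hxz hcz hpos
  refine hF.false_of_unique_negative hns hnone hx₀ hξ hξ₁ hξ₂ hζ hζv sξ₁ sξ₂ hv hxz hcz ?_
  intro c hc d hd hcd
  rcases eq_or_ne c v with rfl | hcv
  · by_contra hdz
    have hξd : ∀ {ξ}, G.nbhd ξ = G.nbhd x₀ → ξ ≠ d := by rintro ξ hξ rfl; exact hd.ne hξ.symm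
    have hξz : ∀ {ξ}, G.nbhd ξ = G.nbhd x₀ → ξ ≠ z := by rintro ξ hξ rfl; exact hxz.ne hξ.symm
    exact hF.not_hasF3 (hasF3_of_adj hζv hξ (hξz hξ₁) (hξd hξ₁) (hξz hξ₂) (hξd hξ₂)
      (Ne.symm hdz) (hξ₁.symm.subset hζ).symm (hξ₂.symm.subset hζ).symm (hxz.subset hζ).symm
      (hd.subset hζ).symm (hξ₁.symm.subset hc).symm (hξ₂.symm.subset hc).symm
      (hxz.subset hc).symm (hd.subset hc).symm sξ₁ sξ₂ hcz hcd)
  · simp [hpos c hc hcv d hd] at hcd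

lemma FreeOfF1To6.false_of_isolate_signedSimplicial [Finite V] (hF : G.FreeOfF1To6)
    (hns : ¬ IsSeparableGraph G.graph) (hnone : ∀ a b, ¬ G.SignedSimplicial a b)
    (hx₀ : G.IsMinNbhd x₀) (h : (G.isolate {w | G.nbhd w = G.nbhd x₀}).SignedSimplicial u v)
    (hu : G.side u = G.side x₀) : False := by
  obtain ⟨huv, hux, hvx⟩ := isolate_adj.1 h.1
  have hxu : G.nbhd x₀ ⊆ G.nbhd u := hx₀.2 u hu ⟨v, huv⟩
  have hnu : ∀ c ∈ G.nbhd u, c ∉ {w | G.nbhd w = G.nbhd x₀} := fun c hc hcx =>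
    G.bipartite hc (hu.trans (side_eq_of_nbhd_eq hx₀.1 hcx).symm)
  by_cases hv : v ∈ G.nbhd x₀
  · refine hF.false_of_positive_above_corner hns hnone hx₀ (hxu.ssubset_of_ne (Ne.symm hux)) hv
      fun c hc hcv d hd hdu => ?_
    exact ((signedSimplicial_iff.1 h).2 c (isolate_adj.2 ⟨hc, hux, hnu c hc⟩) hcv d
      (isolate_adj.2 ⟨(hd.subset hv).symm, hvx, hd.ne.symm⟩) hdu).2
  · exact hnone u v (h.of_isolate hnu fun d hd (hdx : G.nbhd d = _) => hv (hdx.subset hd.symm))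

lemma FreeOfF1To6.false_of_isolate_edgeless (hF : G.FreeOfF1To6)
    (hnone : ∀ a b, ¬ G.SignedSimplicial a b) (hx₀ : G.IsMinNbhd x₀)
    (hH : ∀ a b, ¬ (G.isolate {w | G.nbhd w = G.nbhd x₀}).Adj a b) : False := by
  obtain ⟨a, ha⟩ := hx₀.1
  refine hF.false_of_complete_block (X := {w | G.nbhd w = G.nbhd x₀}) (Y := G.nbhd x₀)
    (fun w (hw : _ = _) y hy => hw.symm.subset hy) (fun w (hw : G.nbhd w = _) c₀ hc₀ => ?_)
    (rfl : G.nbhd x₀ = _) ha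
  obtain ⟨c, hc, hcc₀, d, hd, hdw, hcd⟩ := exists_negative_of_not_signedSimplicial
    (hw.symm.subset hc₀) (fun d hd => hw ▸ (hx₀.mem_nbhd_iff hc₀).1 hd) (hnone w c₀)
  rw [hw] at hc
  have hdc : G.Adj d c := (hx₀.mem_nbhd_iff hc₀).1 hd hc
  have hcX : G.nbhd c ≠ G.nbhd x₀ := fun h => G.not_adj_self x₀ (h.subset hc.symm)
  by_cases hdX : G.nbhd d = G.nbhd x₀
  · exact ⟨d, hdX, c, hc, hdw, hcc₀, sign_eq_false_symm hcd⟩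
  · exact absurd (isolate_adj.2 ⟨hdc, hdX, hcX⟩) (hH d c)

theorem exists_signedSimplicial [Finite V] (hns : ¬ IsSeparableGraph G.graph)
    (hF : G.FreeOfF1To6) (hab : G.Adj a b) : ∃ u v, G.SignedSimplicial u v := by
  obtain ⟨n, hn⟩ : ∃ n, G.graph.edgeSet.ncard = n := ⟨_, rfl⟩
  induction n using Nat.strong_induction_on generalizing G a b with
  | _ n ih =>
  by_contra hnone
  push Not at hnone
  obtain ⟨x₀, hx₀⟩ := exists_isMinNbhd hns hab
  set S := {w | G.nbhd w = G.nbhd x₀}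
  have hS := isSimplicialDeletion_isolate (G := G) S
  by_cases hH : ∃ p q, (G.isolate S).Adj p q
  · obtain ⟨p, q, hpq⟩ := hH
    obtain ⟨c, hc⟩ := hx₀.1
    have hlt := ncard_edgeSet_deleteEdges_lt (s := {e | ∃ w ∈ S, w ∈ e}) hc
      ⟨x₀, rfl, Sym2.mem_mk_left _ _⟩
    obtain ⟨u, v, huv⟩ := ih _ (hn ▸ hlt) (not_isSeparable_deleteEdges hns hS)
      (hF.deleteEdges hS) hpq rfl
    by_cases hu : G.side u = G.side x₀
    · exact hF.false_of_isolate_signedSimplicial hns hnone hx₀ huv hu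
    · exact hF.false_of_isolate_signedSimplicial hns hnone hx₀ huv.symm
        (side_eq_of_adj_of_side_ne (isolate_adj.1 huv.1).1 hu)
  · push Not at hH
    exact hF.false_of_isolate_edgeless hnone hx₀ hH

theorem isChordal_of_freeOfF1To6 [Finite V] (hns : ¬ IsSeparableGraph G.graph)
    (hF : G.FreeOfF1To6) : G.IsChordal := by
  obtain ⟨n, hn⟩ : ∃ n, G.graph.edgeSet.ncard = n := ⟨_, rfl⟩
  induction n using Nat.strong_induction_on generalizing G with
  | _ n ih =>
  by_cases hE : ∃ a b, G.Adj a b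
  · obtain ⟨a, b, hab⟩ := hE
    obtain ⟨u, v, huv⟩ := exists_signedSimplicial hns hF hab
    have hS := huv.isSimplicialDeletion
    exact IsChordal.of_deleteEdges huv (ih _ (hn ▸ ncard_edgeSet_deleteEdges_lt huv.1 rfl)
      (not_isSeparable_deleteEdges hns hS) (hF.deleteEdges hS) rfl)
  · push Not at hE
    refine ⟨[], List.nodup_nil, fun e => ?_, fun i hi => absurd hi (Nat.not_lt_zero i)⟩
    induction e using Sym2.ind with
    | _ a b => exact ⟨fun h => absurd h (hE a b), fun h => absurd h List.not_mem_nil⟩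

end SignedBigraph

open SignedBigraph in
/-- Theorem 3.2: a signed non-separable bigraph is chordal iff it
contains no member of `F₁ ∪ F₂ ∪ F₃ ∪ F₄ ∪ F₅ ∪ F₆` as an induced subgraph. -/
theorem signedNonseparableBigraph_isChordal_iff
    {V : Type u} [Fintype V] (G : SignedBigraph V)
    (hns : ¬ IsSeparableGraph G.graph) :
    G.IsChordal ↔
      ¬ (G.HasF1 ∨ G.HasF2 ∨ G.HasF3 ∨ G.HasF4 ∨ G.HasF5 ∨ G.HasF6) := by
  rw [← freeOfF1To6_iff]
  exact ⟨IsChordal.freeOfF1To6, isChordal_of_freeOfF1To6 hns⟩
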